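/- arXiv:1501.04296 — 4 statements merged into one kernel-verified Lean document; each statement's English description precedes it below -/
import Mathlib

section
/- Let G be a simple finite bipartite graph and f : V(G) → ℕ assign a positive integer to each vertex. Then G is f-Class 1, i.e., χ'_f(G) = Δ_f(G). -/
open Finset
open scoped Classical

variable {V : Type*}

/-- `Δ_f(G) = max_{v} ⌈deg(v)/f(v)⌉`, with the ceiling written as `(d + f - 1) / f`. -/
noncomputable def fDelta [Fintype V] (G : SimpleGraph V) (f : V → ℕ) : ℕ :=
  Finset.univ.sup fun v => (G.degree v + f v - 1) / f v

/-- The set of `f`-maximum vertices, i.e. the vertex set of the `f`-core `G_{Δ_f}`. -/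
def fCoreSet [Fintype V] (G : SimpleGraph V) (f : V → ℕ) : Set V :=
  {v | G.degree v = f v * fDelta G f}

/-- The number of edges incident to `x` that receive the color `α` under `c`. -/
noncomputable def colorCount [Fintype V] (G : SimpleGraph V) {C : Type*}
    (c : G.edgeSet → C) (x : V) (α : C) : ℕ :=
  (Finset.univ.filter fun e : G.edgeSet => x ∈ (e : Sym2 V) ∧ c e = α).card

/-- `c` is an `f`-coloring: every color appears at most `f x` times at each vertex `x`. -/
def IsFColoring [Fintype V] (G : SimpleGraph V) (f : V → ℕ) {C : Type*}
    (c : G.edgeSet → C) : Prop :=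
  ∀ x : V, ∀ α : C, colorCount G c x α ≤ f x

/-- The `f`-chromatic index `χ'_f(G)`: the least number of colors of an `f`-coloring. -/
noncomputable def fChromaticIndex [Fintype V] (G : SimpleGraph V) (f : V → ℕ) : ℕ :=
  sInf {k : ℕ | ∃ c : G.edgeSet → Fin k, IsFColoring G f c}

/-- `G` is `f`-Class 1 when `χ'_f(G) = Δ_f(G)`. -/
def IsFClassOne [Fintype V] (G : SimpleGraph V) (f : V → ℕ) : Prop :=
  fChromaticIndex G f = fDelta G f

variable {G : SimpleGraph V}

noncomputable def pathColor : {u v : V} → G.Walk u v → Bool → Sym2 V → Bool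
  | _, _, SimpleGraph.Walk.nil, _, _ => false
  | _, _, @SimpleGraph.Walk.cons _ _ a b' _ _ q, c, s => if s = s(a, b') then c else pathColor q (!c) s

@[simp] lemma pathColor_cons {u w v : V} (h : G.Adj u w) (q : G.Walk w v) (b : Bool) (s : Sym2 V) :
    pathColor (SimpleGraph.Walk.cons h q) b s = if s = s(u,w) then b else pathColor q (!b) s := rfl

noncomputable def ecnt (l : List (Sym2 V)) (col : Sym2 V → Bool) (x : V) (γ : Bool) : ℕ :=
  l.countP (fun s => decide (x ∈ s ∧ col s = γ))

lemma ecnt_nil (col : Sym2 V → Bool) (x : V) (γ : Bool) : ecnt ([] : List (Sym2 V)) col x γ = 0 := rfl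

lemma ecnt_cons (s : Sym2 V) (l : List (Sym2 V)) (col : Sym2 V → Bool) (x : V) (γ : Bool) :
    ecnt (s :: l) col x γ = ecnt l col x γ + (if x ∈ s ∧ col s = γ then 1 else 0) := by
  simp [ecnt, List.countP_cons]

lemma ecnt_congr {l : List (Sym2 V)} {col col' : Sym2 V → Bool} (h : ∀ s ∈ l, col s = col' s)
    (x : V) (γ : Bool) : ecnt l col x γ = ecnt l col' x γ := by
  induction l with
  | nil => rfl
  | cons a t ih =>
    rw [ecnt_cons, ecnt_cons, ih (fun s hs => h s (List.mem_cons_of_mem _ hs)),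
      h a List.mem_cons_self]

lemma mem_support_of_mem_edges' {u v x : V} (p : G.Walk u v) (s : Sym2 V)
    (hs : s ∈ p.edges) (hx : x ∈ s) : x ∈ p.support := by
  induction s using Sym2.ind with
  | _ a b =>
    rcases Sym2.mem_iff.1 hx with rfl | rfl
    · exact p.fst_mem_support_of_mem_edges hs
    · exact p.snd_mem_support_of_mem_edges hs

lemma ecnt_edges_zero {u v x : V} (p : G.Walk u v) (col : Sym2 V → Bool)
    (hx : x ∉ p.support) (γ : Bool) : ecnt p.edges col x γ = 0 := by
  simp only [ecnt, List.countP_eq_zero]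
  intro s hs
  simp only [decide_eq_true_eq, not_and]
  intro h _
  exact (hx (mem_support_of_mem_edges' p s hs h)).elim

lemma xor_parity (b : Bool) (n : ℕ) : (!b ^^ decide (Even n)) = (b ^^ decide (Even (n+1))) := by
  rcases Nat.even_or_odd n with he | ho
  · have h1 : decide (Even n) = true := decide_eq_true he
    have h2 : decide (Even (n+1)) = false :=
      decide_eq_false (fun hc => (Nat.even_add_one.mp hc) he)
    rw [h1, h2]; cases b <;> rfl
  · have h1 : decide (Even n) = false := decide_eq_false (Nat.not_even_iff_odd.mpr ho)
    have h2 : decide (Even (n+1)) = true :=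
      decide_eq_true (Nat.even_add_one.mpr (Nat.not_even_iff_odd.mpr ho))
    rw [h1, h2]; cases b <;> rfl

theorem path_ecnt :
    ∀ {u v : V} (p : G.Walk u v), p.IsPath → ∀ b : Bool,
    (∀ γ, ecnt p.edges (pathColor p b) u γ = if p.length ≠ 0 ∧ γ = b then 1 else 0)
  ∧ (p.length ≠ 0 → ∀ γ, ecnt p.edges (pathColor p b) v γ =
      if γ = (b ^^ decide (Even p.length)) then 1 else 0)
  ∧ (∀ x, x ∈ p.support → x ≠ u → x ≠ v → ∀ γ, ecnt p.edges (pathColor p b) x γ = 1) := by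
  intro u v p
  induction p with
  | nil =>
    intro _ b
    refine ⟨fun γ => by simp [ecnt_nil], fun h => absurd rfl h, fun x hx hxu _ => ?_⟩
    simp only [SimpleGraph.Walk.support_nil, List.mem_singleton] at hx
    exact absurd hx hxu
  | @cons a c v h q ih =>
    intro hp b
    have hq : q.IsPath := hp.of_cons
    have hanot : a ∉ q.support := ((SimpleGraph.Walk.cons_isPath_iff h q).1 hp).2
    have hac : a ≠ c := h.ne
    have hedge : ∀ s ∈ q.edges, pathColor (SimpleGraph.Walk.cons h q) b s = pathColor q (!b) s := by
      intro s hs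
      rw [pathColor_cons, if_neg]
      rintro rfl
      exact hanot (mem_support_of_mem_edges' q _ hs (Sym2.mem_mk_left a c))
    have key : ∀ x γ, ecnt (SimpleGraph.Walk.cons h q).edges (pathColor (SimpleGraph.Walk.cons h q) b) x γ
        = ecnt q.edges (pathColor q (!b)) x γ + (if x ∈ s(a,c) ∧ b = γ then 1 else 0) := by
      intro x γ
      rw [SimpleGraph.Walk.edges_cons, ecnt_cons, ecnt_congr hedge x γ]
      congr 1
      rw [pathColor_cons, if_pos rfl]
    obtain ⟨ih1, ih2, ih3⟩ := ih hq (!b)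
    refine ⟨?_, ?_, ?_⟩
    · -- at start a
      intro γ
      rw [key, ecnt_edges_zero q _ hanot]
      rw [SimpleGraph.Walk.length_cons, Nat.zero_add]
      have : a ∈ s(a,c) := Sym2.mem_mk_left a c
      by_cases hbγ : b = γ
      · subst hbγ; simp [this]
      · rw [if_neg (by rintro ⟨-, rfl⟩; exact hbγ rfl), if_neg (fun hh => hbγ hh.2.symm)]
    · -- at end v
      intro _ γ
      cases q with
      | nil =>
        -- v = c
        rw [key]
        simp only [SimpleGraph.Walk.edges_nil, ecnt_nil, Nat.zero_add]
        have hc : (c : V) ∈ s(a,c) := Sym2.mem_mk_right a c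
        rw [SimpleGraph.Walk.length_cons, SimpleGraph.Walk.length_nil]
        have hxp : (b ^^ decide (Even (0+1))) = b := by
          rw [← xor_parity]; norm_num
        simp only [hxp]
        by_cases hbγ : b = γ
        · subst hbγ; simp [hc]
        · rw [if_neg (by rintro ⟨-, rfl⟩; exact hbγ rfl), if_neg (fun hh => hbγ hh.symm)]
      | @cons c d v h' q' =>
        have hq'path : q'.IsPath := hq.of_cons
        have hcnot : c ∉ q'.support := ((SimpleGraph.Walk.cons_isPath_iff h' q').1 hq).2
        have hvq : v ∈ (SimpleGraph.Walk.cons h' q').support := SimpleGraph.Walk.end_mem_support _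
        have hva : v ≠ a := fun hh => hanot (hh ▸ hvq)
        have hvc : v ≠ c := by
          rintro rfl
          exact hcnot (SimpleGraph.Walk.end_mem_support q')
        rw [key, if_neg, Nat.add_zero]
        · rw [ih2 (by simp)]
          rw [SimpleGraph.Walk.length_cons, SimpleGraph.Walk.length_cons, SimpleGraph.Walk.length_cons]
          simp only [xor_parity]
        · rintro ⟨hv, -⟩
          rcases Sym2.mem_iff.1 hv with rfl | rfl
          · exact hva rfl
          · exact hvc rfl
    · -- internal
      intro x hx hxa hxv γ
      have hxq : x ∈ q.support := by
        rcases (by simpa using hx : x = a ∨ x ∈ q.support) with rfl | hh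
        · exact absurd rfl hxa
        · exact hh
      rw [key]
      by_cases hxc : x = c
      · subst hxc
        have hqne : q.length ≠ 0 := by
          intro h0
          exact hxv (SimpleGraph.Walk.eq_of_length_eq_zero h0)
        rw [ih1 γ]
        have hcmem : x ∈ s(a,x) := Sym2.mem_mk_right a x
        simp only [hqne, ne_eq, not_false_iff, true_and, hcmem, true_and]
        cases b <;> cases γ <;> simp
      · have hxs : x ∉ s(a,c) := by
          intro hh
          rcases Sym2.mem_iff.1 hh with rfl | rfl
          · exact hxa rfl
          · exact hxc rfl
        rw [ih3 x hxq hxc hxv γ]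
        simp [hxs]

lemma cyc_ecnt {x w : V} (h : G.Adj x w) (r : G.Walk w x) (hr : r.IsPath)
    (hxw : s(x,w) ∉ r.edges) (hev : ¬ Even r.length) :
    ∀ y γ, ecnt (SimpleGraph.Walk.cons h r).edges
      (fun s => if s = s(x,w) then true else pathColor r false s) y γ
      = if y ∈ (SimpleGraph.Walk.cons h r).support then 1 else 0 := by
  intro y γ
  obtain ⟨P1, P2, P3⟩ := path_ecnt r hr false
  have hwx : w ≠ x := h.ne'
  have hrne : r.length ≠ 0 := fun h0 => hwx (SimpleGraph.Walk.eq_of_length_eq_zero h0)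
  set col : Sym2 V → Bool := fun s => if s = s(x,w) then true else pathColor r false s with hcol
  have hedge : ∀ s ∈ r.edges, col s = pathColor r false s := by
    intro s hs
    rw [hcol]
    dsimp only
    rw [if_neg]
    rintro rfl
    exact hxw hs
  have key : ecnt (SimpleGraph.Walk.cons h r).edges col y γ
      = ecnt r.edges (pathColor r false) y γ + (if y ∈ s(x,w) ∧ true = γ then 1 else 0) := by
    rw [SimpleGraph.Walk.edges_cons, ecnt_cons, ecnt_congr hedge]
    congr 1
    have : col s(x,w) = true := by rw [hcol]; dsimp only; rw [if_pos rfl]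
    rw [this]
  rw [key]
  have hfc : (false ^^ decide (Even r.length)) = false := by
    rw [decide_eq_false hev]; rfl
  have hsupp : (SimpleGraph.Walk.cons h r).support = x :: r.support :=
    SimpleGraph.Walk.support_cons h r
  by_cases hy : y = x
  · subst hy
    rw [P2 hrne γ]
    simp only [hfc]
    have hmem : y ∈ (SimpleGraph.Walk.cons h r).support := by
      rw [hsupp]; exact List.mem_cons_self
    have hym : y ∈ s(y,w) := Sym2.mem_mk_left _ _
    cases γ <;> simp [hmem, hym]
  · by_cases hyw : y = w
    · subst hyw
      rw [P1 γ]
      have hmem : y ∈ (SimpleGraph.Walk.cons h r).support := by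
        rw [hsupp]; exact List.mem_cons_of_mem _ (SimpleGraph.Walk.start_mem_support r)
      have hym : y ∈ s(x,y) := Sym2.mem_mk_right _ _
      cases γ <;> simp [hmem, hym, hrne]
    · have hns : ¬ y ∈ s(x,w) := by
        intro hmem
        rcases Sym2.mem_iff.1 hmem with rfl | rfl
        · exact hy rfl
        · exact hyw rfl
      by_cases hys : y ∈ r.support
      · rw [P3 y hys hyw hy γ]
        have hmem : y ∈ (SimpleGraph.Walk.cons h r).support := by
          rw [hsupp]; exact List.mem_cons_of_mem _ hys
        simp [hmem, hns, hys]
      · rw [ecnt_edges_zero r _ hys γ]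
        have hmem : ¬ y ∈ (SimpleGraph.Walk.cons h r).support := by
          rw [hsupp]; simp [hy, hys]
        simp [hmem, hns, hy, hys]

noncomputable def fdeg (E : Finset (Sym2 V)) (x : V) : ℕ := (E.filter (fun s => x ∈ s)).card

noncomputable def fcnt {C : Type*} (E : Finset (Sym2 V)) (c : Sym2 V → C) (x : V) (γ : C) : ℕ :=
  (E.filter (fun s => x ∈ s ∧ c s = γ)).card

lemma fcnt_le_fdeg {C : Type*} (E : Finset (Sym2 V)) (c : Sym2 V → C) (x : V) (γ : C) :
    fcnt E c x γ ≤ fdeg E x :=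
  Finset.card_le_card (fun s hs => by
    simp only [Finset.mem_filter] at hs ⊢
    exact ⟨hs.1, hs.2.1⟩)

lemma fdeg_mono {E E' : Finset (Sym2 V)} (h : E ⊆ E') (x : V) : fdeg E x ≤ fdeg E' x :=
  Finset.card_le_card (Finset.filter_subset_filter _ h)

lemma fcnt_congr' {C : Type*} {E : Finset (Sym2 V)} {c c' : Sym2 V → C}
    (h : ∀ s ∈ E, c s = c' s) (x : V) (γ : C) : fcnt E c x γ = fcnt E c' x γ := by
  unfold fcnt
  congr 1
  apply Finset.filter_congr
  intro s hs
  rw [h s hs]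

lemma fcnt_sdiff_add {C : Type*} {D E : Finset (Sym2 V)} (hD : D ⊆ E) (c : Sym2 V → C)
    (x : V) (γ : C) : fcnt (E \ D) c x γ + fcnt D c x γ = fcnt E c x γ := by
  unfold fcnt
  rw [← Finset.card_union_of_disjoint
    (Finset.disjoint_filter_filter Finset.sdiff_disjoint), ← Finset.filter_union,
    Finset.sdiff_union_of_subset hD]

lemma fdeg_sdiff_add {D E : Finset (Sym2 V)} (hD : D ⊆ E) (x : V) :
    fdeg (E \ D) x + fdeg D x = fdeg E x := by
  unfold fdeg
  rw [← Finset.card_union_of_disjoint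
    (Finset.disjoint_filter_filter Finset.sdiff_disjoint), ← Finset.filter_union,
    Finset.sdiff_union_of_subset hD]

lemma fcnt_bool_sum (E : Finset (Sym2 V)) (c : Sym2 V → Bool) (x : V) :
    fcnt E c x false + fcnt E c x true = fdeg E x := by
  unfold fcnt fdeg
  simp only [Finset.card_filter]
  rw [← Finset.sum_add_distrib]
  apply Finset.sum_congr rfl
  intro s _
  by_cases hx : x ∈ s
  · cases hcs : c s <;> simp [hx, hcs]
  · simp [hx]

lemma fcnt_nat_sum {E : Finset (Sym2 V)} {c : Sym2 V → ℕ} {k : ℕ}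
    (hc : ∀ s ∈ E, c s < k) (x : V) :
    ∑ γ ∈ Finset.range k, fcnt E c x γ = fdeg E x := by
  unfold fcnt fdeg
  simp only [Finset.card_filter]
  rw [Finset.sum_comm]
  apply Finset.sum_congr rfl
  intro s hs
  by_cases hx : x ∈ s
  · simp only [hx, true_and]
    rw [Finset.sum_eq_single (c s)]
    · simp
    · intro γ _ hne
      exact if_neg (fun h => hne h.symm)
    · intro hmem
      exact absurd (Finset.mem_range.mpr (hc s hs)) hmem
  · simp [hx]

lemma fcnt_toFinset (l : List (Sym2 V)) (hl : l.Nodup) (col : Sym2 V → Bool)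
    (x : V) (γ : Bool) : fcnt l.toFinset col x γ = ecnt l col x γ := by
  induction l with
  | nil => simp [ecnt_nil, fcnt]
  | cons a t ih =>
    have ha : a ∉ t := (List.nodup_cons.1 hl).1
    rw [ecnt_cons, ← ih (List.nodup_cons.1 hl).2]
    unfold fcnt
    simp only [Finset.card_filter]
    rw [List.toFinset_cons, Finset.sum_insert (fun hmem => ha (List.mem_toFinset.1 hmem))]
    by_cases hpa : x ∈ a ∧ col a = γ
    · simp [hpa, Nat.add_comm]
    · simp [hpa]

lemma walk_parity {H : SimpleGraph V} {Gb : SimpleGraph V} (hle : ∀ a b, H.Adj a b → Gb.Adj a b)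
    (κ : Gb.Coloring (Fin 2)) : ∀ {u v : V} (p : H.Walk u v), Even p.length ↔ κ u = κ v := by
  have h2 : ∀ a b c : Fin 2, a ≠ b → (a = c ↔ ¬ b = c) := by decide
  intro u v p
  induction p with
  | nil => simp
  | @cons u w v h q ih =>
    have hne : κ u ≠ κ w := κ.valid (hle _ _ h)
    rw [SimpleGraph.Walk.length_cons, Nat.even_add_one, ih, h2 _ _ _ hne]

lemma exists_maximal_path [Fintype V] (H : SimpleGraph V) (hE : ∃ a b, H.Adj a b) :
    ∃ (x y : V) (p : H.Walk x y), p.IsPath ∧ 1 ≤ p.length ∧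
      ∀ (a b : V) (q : H.Walk a b), q.IsPath → q.length ≤ p.length := by
  obtain ⟨a, b, hab⟩ := hE
  set S : Set ℕ := {n | ∃ (x y : V) (p : H.Walk x y), p.IsPath ∧ p.length = n} with hS
  have h1 : 1 ∈ S := by
    refine ⟨a, b, SimpleGraph.Walk.cons hab SimpleGraph.Walk.nil, ?_, rfl⟩
    rw [SimpleGraph.Walk.cons_isPath_iff]
    exact ⟨SimpleGraph.Walk.IsPath.nil, by simp [hab.ne]⟩
  have hbdd : BddAbove S := by
    refine ⟨Fintype.card V, ?_⟩
    rintro n ⟨x, y, p, hp, rfl⟩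
    exact hp.length_lt.le
  obtain ⟨x, y, p, hp, hlen⟩ := Nat.sSup_mem ⟨1, h1⟩ hbdd
  refine ⟨x, y, p, hp, ?_, ?_⟩
  · rw [hlen]; exact le_csSup hbdd h1
  · intro a' b' q hq
    rw [hlen]
    exact le_csSup hbdd ⟨a', b', q, hq, rfl⟩

lemma leaf_or_cycle [Fintype V] {G : SimpleGraph V} (E : Finset (Sym2 V))
    (hsub : ∀ s ∈ E, s ∈ G.edgeSet) (hne : E.Nonempty) :
    (∃ x y : V, x ≠ y ∧ s(x,y) ∈ E ∧ ∀ s ∈ E, x ∈ s → s = s(x,y)) ∨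
    (∃ (x w : V) (h : (SimpleGraph.fromEdgeSet (↑E : Set (Sym2 V))).Adj x w)
       (r : (SimpleGraph.fromEdgeSet (↑E : Set (Sym2 V))).Walk w x),
       r.IsPath ∧ s(x,w) ∉ r.edges ∧ (SimpleGraph.Walk.cons h r).IsCycle) := by
  haveI := Classical.decEq V
  set H := SimpleGraph.fromEdgeSet (↑E : Set (Sym2 V)) with hH
  have hadj : ∀ a b : V, H.Adj a b ↔ s(a,b) ∈ E := by
    intro a b
    rw [hH, SimpleGraph.fromEdgeSet_adj]
    constructor
    · rintro ⟨h, -⟩; exact h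
    · intro h
      exact ⟨h, (G.mem_edgeSet.mp (hsub _ h)).ne⟩
  by_cases hcyc : ∃ (x : V) (c : H.Walk x x), c.IsCycle
  · right
    obtain ⟨x, c, hc⟩ := hcyc
    cases c with
    | nil => exact absurd hc SimpleGraph.Walk.IsCycle.not_of_nil
    | @cons _ w _ h' r =>
      obtain ⟨hr, hxw⟩ := (SimpleGraph.Walk.cons_isCycle_iff r h').1 hc
      exact ⟨x, w, h', r, hr, hxw, hc⟩
  · left
    have hEadj : ∃ a b, H.Adj a b := by
      obtain ⟨s, hs⟩ := hne
      revert hs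
      induction s using Sym2.ind with
      | _ a b => exact fun hs => ⟨a, b, (hadj a b).2 hs⟩
    obtain ⟨x, y, p, hp, h1, hmax⟩ := exists_maximal_path H hEadj
    cases p with
    | nil => simp at h1
    | @cons _ c₀ _ h q =>
      have hq : q.IsPath := hp.of_cons
      have hxq : x ∉ q.support := ((SimpleGraph.Walk.cons_isPath_iff h q).1 hp).2
      have claim : ∀ z, H.Adj x z → z = c₀ := by
        intro z hz
        by_contra hzc
        have hzs : z ∈ (SimpleGraph.Walk.cons h q).support := by
          by_contra hzs
          have hpath : (SimpleGraph.Walk.cons hz.symm (SimpleGraph.Walk.cons h q)).IsPath :=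
            (SimpleGraph.Walk.cons_isPath_iff _ _).2 ⟨hp, hzs⟩
          have := hmax _ _ _ hpath
          simp [SimpleGraph.Walk.length_cons] at this
        have hzq : z ∈ q.support := by
          rw [SimpleGraph.Walk.support_cons, List.mem_cons] at hzs
          rcases hzs with hzx | hzq
          · exact absurd hzx.symm hz.ne
          · exact hzq
        set t := q.takeUntil z hzq with ht'
        have ht : t.IsPath := hq.takeUntil hzq
        have hxt : x ∉ t.support :=
          fun hmem => hxq (SimpleGraph.Walk.support_takeUntil_subset q hzq hmem)
        apply hcyc
        refine ⟨x, SimpleGraph.Walk.cons h (t.concat hz.symm), ?_⟩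
        rw [SimpleGraph.Walk.cons_isCycle_iff]
        constructor
        · rw [← SimpleGraph.Walk.isPath_reverse_iff, SimpleGraph.Walk.reverse_concat]
          rw [SimpleGraph.Walk.cons_isPath_iff]
          refine ⟨(SimpleGraph.Walk.isPath_reverse_iff t).2 ht, ?_⟩
          rw [SimpleGraph.Walk.support_reverse]
          intro hmem
          exact hxt (List.mem_reverse.1 hmem)
        · rw [SimpleGraph.Walk.edges_concat]
          intro hmem
          rw [List.concat_eq_append] at hmem
          rcases List.mem_append.1 hmem with hmem | hmem
          · exact hxt (mem_support_of_mem_edges' t _ hmem (Sym2.mem_mk_left _ _))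
          · rw [List.mem_singleton] at hmem
            rcases Sym2.eq_iff.1 hmem with ⟨rfl, -⟩ | ⟨-, hcz⟩
            · exact hz.ne rfl
            · exact hzc hcz.symm
      refine ⟨x, c₀, h.ne, (hadj _ _).1 h, ?_⟩
      intro s hsE hxs
      revert hsE hxs
      induction s using Sym2.ind with
      | _ a b =>
        intro hsE hxs
        rcases Sym2.mem_iff.1 hxs with rfl | rfl
        · rw [claim b ((hadj _ _).2 hsE)]
        · rw [Sym2.eq_swap] at hsE ⊢
          rw [claim a ((hadj _ _).2 hsE)]

lemma fcnt_insert {C : Type*} {E : Finset (Sym2 V)} {s₀ : Sym2 V} (hs₀ : s₀ ∉ E)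
    (c : Sym2 V → C) (x : V) (γ : C) :
    fcnt (insert s₀ E) c x γ = fcnt E c x γ + (if x ∈ s₀ ∧ c s₀ = γ then 1 else 0) := by
  unfold fcnt
  simp only [Finset.card_filter]
  rw [Finset.sum_insert hs₀]
  by_cases hx : x ∈ s₀ ∧ c s₀ = γ <;> simp [hx, Nat.add_comm]

lemma fdeg_insert {E : Finset (Sym2 V)} {s₀ : Sym2 V} (hs₀ : s₀ ∉ E) (x : V) :
    fdeg (insert s₀ E) x = fdeg E x + (if x ∈ s₀ then 1 else 0) := by
  unfold fdeg
  simp only [Finset.card_filter]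
  rw [Finset.sum_insert hs₀]
  by_cases hx : x ∈ s₀ <;> simp [hx, Nat.add_comm]

theorem lemA [Fintype V] (G : SimpleGraph V) (hbip : G.Colorable 2) :
    ∀ (n : ℕ) (E : Finset (Sym2 V)), E.card ≤ n → (∀ s ∈ E, s ∈ G.edgeSet) →
    ∃ c : Sym2 V → Bool, ∀ x γ, fcnt E c x γ ≤ (fdeg E x + 1) / 2 := by
  intro n
  induction n with
  | zero =>
    intro E hcard _
    have hE : E = ∅ := Finset.card_eq_zero.1 (Nat.le_zero.1 hcard)
    subst hE
    exact ⟨fun _ => false, fun x γ => by simp [fcnt]⟩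
  | succ n ih =>
    intro E hcard hsub
    rcases Finset.eq_empty_or_nonempty E with rfl | hne
    · exact ⟨fun _ => false, fun x γ => by simp [fcnt]⟩
    rcases leaf_or_cycle E hsub hne with ⟨x, y, hxy, hmem, huniq⟩ | ⟨x, w, hadj, r, hr, hxw, hcyc⟩
    · -- leaf case
      have hcard' : (E.erase s(x,y)).card ≤ n := by
        have h1 := Finset.card_erase_of_mem hmem
        have h2 : 1 ≤ E.card := Finset.card_pos.2 hne
        omega
      obtain ⟨c', hc'⟩ := ih (E.erase s(x,y)) hcard'
        (fun s hs => hsub s (Finset.erase_subset _ _ hs))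
      have hEeq : E = insert s(x,y) (E.erase s(x,y)) := (Finset.insert_erase hmem).symm
      set E' := E.erase s(x,y) with hE'
      set γ0 : Bool := if fcnt E' c' y false ≤ fcnt E' c' y true then false else true with hγ0
      have hmin : 2 * fcnt E' c' y γ0 ≤ fdeg E' y := by
        have hsum := fcnt_bool_sum E' c' y
        by_cases hle : fcnt E' c' y false ≤ fcnt E' c' y true
        · rw [hγ0, if_pos hle]; omega
        · rw [hγ0, if_neg hle]; omega
      refine ⟨fun s => if s = s(x,y) then γ0 else c' s, ?_⟩
      intro z γ
      by_cases hzx : z = x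
      · -- degree of x is 1
        subst hzx
        have hfil : E.filter (fun s => z ∈ s) = {s(z,y)} := by
          apply Finset.eq_singleton_iff_unique_mem.2
          constructor
          · exact Finset.mem_filter.2 ⟨hmem, Sym2.mem_mk_left _ _⟩
          · intro s hs
            obtain ⟨hsE, hzs⟩ := Finset.mem_filter.1 hs
            exact huniq s hsE hzs
        have hdeg1 : fdeg E z = 1 := by
          unfold fdeg
          rw [hfil, Finset.card_singleton]
        calc fcnt E _ z γ ≤ fdeg E z := fcnt_le_fdeg _ _ _ _
        _ ≤ (fdeg E z + 1) / 2 := by rw [hdeg1]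
      · have hsplit : fcnt E (fun s => if s = s(x,y) then γ0 else c' s) z γ
            = fcnt E' c' z γ + (if z ∈ s(x,y) ∧ γ0 = γ then 1 else 0) := by
          rw [hEeq, fcnt_insert (Finset.notMem_erase _ _)]
          have h1 : fcnt E' (fun s => if s = s(x,y) then γ0 else c' s) z γ = fcnt E' c' z γ :=
            fcnt_congr' (fun s hs => if_neg (Finset.ne_of_mem_erase hs)) z γ
          rw [h1]
          congr 1
          by_cases hz : z ∈ s(x,y) ∧ γ0 = γ
          · rw [if_pos ⟨hz.1, by rw [if_pos rfl]; exact hz.2⟩, if_pos hz]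
          · rw [if_neg, if_neg hz]
            rintro ⟨hz1, hz2⟩
            rw [if_pos rfl] at hz2
            exact hz ⟨hz1, hz2⟩
        have hdegeq : fdeg E z = fdeg E' z + (if z ∈ s(x,y) then 1 else 0) := by
          rw [hEeq, fdeg_insert (Finset.notMem_erase _ _)]
        rw [hsplit, hdegeq]
        by_cases hzy : z ∈ s(x,y)
        · have hzy' : z = y := by
            rcases Sym2.mem_iff.1 hzy with rfl | rfl
            · exact absurd rfl hzx
            · rfl
          subst hzy'
          rw [if_pos hzy]
          by_cases hγ : γ0 = γ
          · rw [if_pos ⟨hzy, hγ⟩]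
            subst hγ
            omega
          · rw [if_neg (fun hc => hγ hc.2)]
            have := hc' z γ
            omega
        · rw [if_neg hzy, if_neg (fun hc => hzy hc.1)]
          have := hc' z γ
          omega
    · -- cycle case
      have hnodup : (SimpleGraph.Walk.cons hadj r).edges.Nodup :=
        hcyc.isCircuit.isTrail.edges_nodup
      set D := (SimpleGraph.Walk.cons hadj r).edges.toFinset with hD
      have hDsub : D ⊆ E := by
        intro s hs
        have h1 := (SimpleGraph.Walk.cons hadj r).edges_subset_edgeSet (List.mem_toFinset.1 hs)
        rw [SimpleGraph.edgeSet_fromEdgeSet] at h1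
        exact h1.1
      have hDne : s(x,w) ∈ D := by
        rw [hD]
        apply List.mem_toFinset.2
        rw [SimpleGraph.Walk.edges_cons]
        exact List.mem_cons_self
      have hcard' : (E \ D).card ≤ n := by
        have h1 : (E \ D).card = E.card - D.card := Finset.card_sdiff_of_subset hDsub
        have h2 : 1 ≤ D.card := Finset.card_pos.2 ⟨_, hDne⟩
        have h3 : D.card ≤ E.card := Finset.card_le_card hDsub
        omega
      obtain ⟨c', hc'⟩ := ih (E \ D) hcard' (fun s hs => hsub s (Finset.mem_sdiff.1 hs).1)
      have hev : ¬ Even r.length := by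
        obtain ⟨κ⟩ := hbip
        have hle : ∀ a b, (SimpleGraph.fromEdgeSet (↑E : Set (Sym2 V))).Adj a b → G.Adj a b := by
          intro a b hab
          rw [SimpleGraph.fromEdgeSet_adj] at hab
          exact G.mem_edgeSet.mp (hsub _ hab.1)
        have heven : Even (SimpleGraph.Walk.cons hadj r).length :=
          (walk_parity hle κ (SimpleGraph.Walk.cons hadj r)).2 rfl
        rw [SimpleGraph.Walk.length_cons, Nat.even_add_one] at heven
        exact heven
      have hcyccnt : ∀ z γ, fcnt D (fun s => if s = s(x,w) then true else pathColor r false s) z γ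
          = if z ∈ (SimpleGraph.Walk.cons hadj r).support then 1 else 0 := by
        intro z γ
        rw [hD, fcnt_toFinset _ hnodup]
        exact cyc_ecnt hadj r hr hxw hev z γ
      refine ⟨fun s => if s ∈ D then (if s = s(x,w) then true else pathColor r false s)
        else c' s, ?_⟩
      intro z γ
      have hsplit : fcnt E (fun s => if s ∈ D then (if s = s(x,w) then true else pathColor r false s)
          else c' s) z γ = fcnt (E \ D) c' z γ
            + fcnt D (fun s => if s = s(x,w) then true else pathColor r false s) z γ := by
        rw [← fcnt_sdiff_add hDsub _ z γ]
        congr 1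
        · exact fcnt_congr' (fun s hs => if_neg (Finset.mem_sdiff.1 hs).2) z γ
        · exact fcnt_congr' (fun s hs => if_pos hs) z γ
      have hdegeq : fdeg (E \ D) z + fdeg D z = fdeg E z := fdeg_sdiff_add hDsub z
      have hDdeg : fdeg D z = (if z ∈ (SimpleGraph.Walk.cons hadj r).support then 1 else 0)
          + (if z ∈ (SimpleGraph.Walk.cons hadj r).support then 1 else 0) := by
        rw [← fcnt_bool_sum D (fun s => if s = s(x,w) then true else pathColor r false s) z,
          hcyccnt z false, hcyccnt z true]
      rw [hsplit, hcyccnt z γ]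
      have hb := hc' z γ
      by_cases hzs : z ∈ (SimpleGraph.Walk.cons hadj r).support
      · rw [if_pos hzs] at hDdeg ⊢
        omega
      · rw [if_neg hzs] at hDdeg ⊢
        omega

theorem lemB [Fintype V] (G : SimpleGraph V) (hbip : G.Colorable 2) (f : V → ℕ) :
    ∀ (n : ℕ) (E : Finset (Sym2 V)), E.card ≤ n → (∀ s ∈ E, s ∈ G.edgeSet) →
    ∀ k : ℕ, (∀ x, fdeg E x ≤ k * f x) →
    ∃ c : Sym2 V → ℕ, (∀ s ∈ E, c s < k) ∧ ∀ x γ, fcnt E c x γ ≤ f x := by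
  intro n
  induction n with
  | zero =>
    intro E hcard _ k _
    have hE : E = ∅ := Finset.card_eq_zero.1 (Nat.le_zero.1 hcard)
    subst hE
    exact ⟨fun _ => 0, fun s hs => absurd hs (Finset.notMem_empty s),
      fun x γ => by simp [fcnt]⟩
  | succ n ih =>
    intro E hcard hsub k hdeg
    rcases Finset.eq_empty_or_nonempty E with rfl | hne
    · exact ⟨fun _ => 0, fun s hs => absurd hs (Finset.notMem_empty s),
        fun x γ => by simp [fcnt]⟩
    -- pick an edge s(u,v) ∈ E
    obtain ⟨s₀, hs₀⟩ := hne
    obtain ⟨u, v, rfl⟩ : ∃ u v : V, s₀ = s(u,v) := by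
      revert hs₀
      induction s₀ using Sym2.ind with
      | _ a b => exact fun _ => ⟨a, b, rfl⟩
    have huv : u ≠ v := (G.mem_edgeSet.mp (hsub _ hs₀)).ne
    set E' := E.erase s(u,v) with hE'
    have hEeq : E = insert s(u,v) E' := (Finset.insert_erase hs₀).symm
    have hcard' : E'.card ≤ n := by
      have h1 : E'.card = E.card - 1 := Finset.card_erase_of_mem hs₀
      have h2 : 1 ≤ E.card := Finset.card_pos.2 ⟨_, hs₀⟩
      omega
    have hsub' : ∀ s ∈ E', s ∈ G.edgeSet := fun s hs => hsub s (Finset.erase_subset _ _ hs)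
    obtain ⟨c', hc'k, hc'⟩ := ih E' hcard' hsub' k
      (fun x => le_trans (fdeg_mono (Finset.erase_subset _ _) x) (hdeg x))
    -- degree bookkeeping
    have hdegu : fdeg E u = fdeg E' u + 1 := by
      rw [hEeq, fdeg_insert (Finset.notMem_erase _ _), if_pos (Sym2.mem_mk_left _ _)]
    have hdegv : fdeg E v = fdeg E' v + 1 := by
      rw [hEeq, fdeg_insert (Finset.notMem_erase _ _), if_pos (Sym2.mem_mk_right _ _)]
    have hdegu1 : 1 ≤ fdeg E u := by omega
    -- find colors α, β free at u, v resp.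
    have hfind : ∀ z : V, z ∈ s(u,v) → fdeg E z = fdeg E' z + 1 →
        ∃ α, α < k ∧ fcnt E' c' z α < f z := by
      intro z _ hzdeg
      by_contra hcon
      push_neg at hcon
      have hsum : ∑ γ ∈ Finset.range k, fcnt E' c' z γ = fdeg E' z :=
        fcnt_nat_sum (fun s hs => hc'k s hs) z
      have hsum2 : k * f z ≤ ∑ γ ∈ Finset.range k, fcnt E' c' z γ := by
        calc k * f z = ∑ _γ ∈ Finset.range k, f z := by
              rw [Finset.sum_const, Finset.card_range, smul_eq_mul]
        _ ≤ _ := Finset.sum_le_sum (fun γ hγ => hcon γ (Finset.mem_range.1 hγ))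
      have h3 := hdeg z
      have h4 : 1 ≤ fdeg E z := by omega
      omega
    obtain ⟨α, hαk, hα⟩ := hfind u (Sym2.mem_mk_left _ _) hdegu
    obtain ⟨β, hβk, hβ⟩ := hfind v (Sym2.mem_mk_right _ _) hdegv
    by_cases hαβ : α = β
    · -- same color: just color the new edge α
      subst hαβ
      refine ⟨fun s => if s = s(u,v) then α else c' s, ?_, ?_⟩
      · intro s hs
        show (if s = s(u,v) then α else c' s) < k
        by_cases h : s = s(u,v)
        · rw [if_pos h]; exact hαk
        · rw [if_neg h]
          exact hc'k s (Finset.mem_erase.2 ⟨h, hs⟩)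
      · intro z γ
        have hsplit : fcnt E (fun s => if s = s(u,v) then α else c' s) z γ
            = fcnt E' c' z γ + (if z ∈ s(u,v) ∧ α = γ then 1 else 0) := by
          rw [hEeq, fcnt_insert (Finset.notMem_erase _ _)]
          have h1 : fcnt E' (fun s => if s = s(u,v) then α else c' s) z γ = fcnt E' c' z γ :=
            fcnt_congr' (fun s hs => if_neg (Finset.ne_of_mem_erase hs)) z γ
          rw [h1]
          congr 1
          by_cases hz : z ∈ s(u,v) ∧ α = γ
          · rw [if_pos ⟨hz.1, show (if s(u,v) = s(u,v) then α else c' s(u,v)) = γ by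
              rw [if_pos rfl]; exact hz.2⟩, if_pos hz]
          · rw [if_neg, if_neg hz]
            rintro ⟨hz1, hz2⟩
            replace hz2 : (if s(u,v) = s(u,v) then α else c' s(u,v)) = γ := hz2
            rw [if_pos rfl] at hz2
            exact hz ⟨hz1, hz2⟩
        rw [hsplit]
        by_cases hz : z ∈ s(u,v) ∧ α = γ
        · rw [if_pos hz]
          obtain ⟨hz1, rfl⟩ := hz
          rcases Sym2.mem_iff.1 hz1 with rfl | rfl
          · omega
          · omega
        · rw [if_neg hz]
          have := hc' z γ
          omega
    · -- different colors: recolor the α/β subgraph using lemA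
      set F : Finset (Sym2 V) := insert s(u,v) (E'.filter fun s => c' s = α ∨ c' s = β) with hF
      have hFE' : (E'.filter fun s => c' s = α ∨ c' s = β) ⊆ E' := Finset.filter_subset _ _
      have hs₀F : s(u,v) ∉ (E'.filter fun s => c' s = α ∨ c' s = β) :=
        fun hmem => Finset.notMem_erase _ _ (hFE' hmem)
      have hFsub : F ⊆ E := by
        rw [hF]
        intro s hs
        rcases Finset.mem_insert.1 hs with rfl | hs
        · exact hs₀
        · exact Finset.erase_subset _ _ (hFE' hs)
      obtain ⟨c₂, hc₂⟩ := lemA G hbip F.card F le_rfl (fun s hs => hsub s (hFsub hs))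
      -- the degree of F is at most 2 * f z
      have hFdeg : ∀ z, fdeg F z ≤ 2 * f z := by
        intro z
        have h1 : fdeg F z = fdeg (E'.filter fun s => c' s = α ∨ c' s = β) z
            + (if z ∈ s(u,v) then 1 else 0) := by
          rw [hF, fdeg_insert hs₀F]
        have h2 : fdeg (E'.filter fun s => c' s = α ∨ c' s = β) z
            ≤ fcnt E' c' z α + fcnt E' c' z β := by
          unfold fdeg fcnt
          refine le_trans (Finset.card_le_card ?_) (Finset.card_union_le _ _)
          intro s hs
          obtain ⟨hs1, hs2⟩ := Finset.mem_filter.1 hs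
          obtain ⟨hs3, hs4⟩ := Finset.mem_filter.1 hs1
          rcases hs4 with h | h
          · apply Finset.mem_union_left
            simp only [Finset.mem_filter]
            exact ⟨hs3, hs2, h⟩
          · apply Finset.mem_union_right
            simp only [Finset.mem_filter]
            exact ⟨hs3, hs2, h⟩
        have hu' := hc' z α
        have hv' := hc' z β
        by_cases hz : z ∈ s(u,v)
        · rcases Sym2.mem_iff.1 hz with rfl | rfl
          · rw [h1, if_pos hz]; omega
          · rw [h1, if_pos hz]; omega
        · rw [h1, if_neg hz]; omega
      -- the combined coloring
      refine ⟨fun s => if s ∈ F then (if c₂ s then β else α) else c' s, ?_, ?_⟩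
      · intro s hs
        show (if s ∈ F then (if c₂ s then β else α) else c' s) < k
        by_cases h : s ∈ F
        · rw [if_pos h]
          by_cases h2 : c₂ s
          · simp only [h2, if_true]; exact hβk
          · simp only [h2, if_false]; exact hαk
        · rw [if_neg h]
          apply hc'k
          apply Finset.mem_erase.2
          refine ⟨?_, hs⟩
          rintro rfl
          exact h (Finset.mem_insert_self _ _)
      · intro z γ
        have hEF : E \ F ⊆ E' := by
          intro s hs
          obtain ⟨hs1, hs2⟩ := Finset.mem_sdiff.1 hs
          apply Finset.mem_erase.2
          refine ⟨?_, hs1⟩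
          rintro rfl
          exact hs2 (Finset.mem_insert_self _ _)
        have hsplit : fcnt E (fun s => if s ∈ F then (if c₂ s then β else α) else c' s) z γ
            = fcnt (E \ F) c' z γ + fcnt F (fun s => if c₂ s then β else α) z γ := by
          rw [← fcnt_sdiff_add hFsub _ z γ]
          congr 1
          · exact fcnt_congr' (fun s hs => if_neg (Finset.mem_sdiff.1 hs).2) z γ
          · exact fcnt_congr' (fun s hs => if_pos hs) z γ
        rw [hsplit]
        -- map colors: fcnt F (if c₂ then β else α) z α = fcnt F c₂ z false etc.
        have hmapα : fcnt F (fun s => if c₂ s then β else α) z α = fcnt F c₂ z false := by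
          unfold fcnt
          simp only [Finset.card_filter]
          apply Finset.sum_congr rfl
          intro s _
          by_cases h2 : c₂ s
          · simp [h2, Ne.symm hαβ]
          · simp [h2]
        have hmapβ : fcnt F (fun s => if c₂ s then β else α) z β = fcnt F c₂ z true := by
          unfold fcnt
          simp only [Finset.card_filter]
          apply Finset.sum_congr rfl
          intro s _
          by_cases h2 : c₂ s
          · simp [h2]
          · simp [h2, hαβ]
        by_cases hγα : γ = α
        · subst hγα
          have hz0 : fcnt (E \ F) c' z γ = 0 := by
            unfold fcnt
            apply Finset.card_eq_zero.2
            apply Finset.eq_empty_of_forall_notMem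
            intro s hs
            simp only [Finset.mem_filter] at hs
            obtain ⟨hs0, hzs, hcs⟩ := hs
            apply (Finset.mem_sdiff.1 hs0).2
            apply Finset.mem_insert.2
            right
            simp only [Finset.mem_filter]
            exact ⟨hEF hs0, Or.inl hcs⟩
          rw [hz0, hmapα]
          have h1 := hc₂ z false
          have h2 := hFdeg z
          omega
        · by_cases hγβ : γ = β
          · subst hγβ
            have hz0 : fcnt (E \ F) c' z γ = 0 := by
              unfold fcnt
              apply Finset.card_eq_zero.2
              apply Finset.eq_empty_of_forall_notMem
              intro s hs
              simp only [Finset.mem_filter] at hs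
              obtain ⟨hs0, hzs, hcs⟩ := hs
              apply (Finset.mem_sdiff.1 hs0).2
              apply Finset.mem_insert.2
              right
              simp only [Finset.mem_filter]
              exact ⟨hEF hs0, Or.inr hcs⟩
            rw [hz0, hmapβ]
            have h1 := hc₂ z true
            have h2 := hFdeg z
            omega
          · -- γ is neither α nor β: F contributes nothing
            have hz0 : fcnt F (fun s => if c₂ s then β else α) z γ = 0 := by
              unfold fcnt
              apply Finset.card_eq_zero.2
              apply Finset.eq_empty_of_forall_notMem
              intro s hs
              simp only [Finset.mem_filter] at hs
              obtain ⟨hs0, hzs, hcs⟩ := hs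
              replace hcs : (if c₂ s then β else α) = γ := hcs
              by_cases h2 : c₂ s
              · rw [if_pos h2] at hcs; exact hγβ hcs.symm
              · rw [if_neg h2] at hcs; exact hγα hcs.symm
            have h1 : fcnt (E \ F) c' z γ ≤ fcnt E' c' z γ :=
              Finset.card_le_card (fun s hs => by
                simp only [Finset.mem_filter] at hs ⊢
                exact ⟨hEF hs.1, hs.2⟩)
            have h2 := hc' z γ
            omega

lemma fdeg_edgeFinset [Fintype V] (G : SimpleGraph V) (v : V) :
    fdeg G.edgeFinset v = G.degree v := by
  haveI := Classical.decEq V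
  unfold fdeg
  rw [← SimpleGraph.card_incidenceFinset_eq_degree]
  congr 1
  ext s
  simp only [Finset.mem_filter, SimpleGraph.mem_incidenceFinset, SimpleGraph.incidenceSet,
    SimpleGraph.mem_edgeFinset, Set.mem_setOf_eq, Set.mem_sep_iff]

lemma colorCount_eq_fcnt [Fintype V] (G : SimpleGraph V) {k : ℕ} (c₀ : G.edgeSet → Fin k)
    (cN : Sym2 V → ℕ) (hagree : ∀ e : G.edgeSet, (c₀ e : ℕ) = cN e) (x : V) (α : Fin k) :
    colorCount G c₀ x α = fcnt G.edgeFinset cN x (α : ℕ) := by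
  unfold colorCount fcnt
  apply Finset.card_bij (fun (e : G.edgeSet) _ => (e : Sym2 V))
  · intro e he
    simp only [Finset.mem_filter, Finset.mem_univ, true_and] at he
    simp only [Finset.mem_filter]
    exact ⟨SimpleGraph.mem_edgeFinset.2 e.2, he.1, by rw [← hagree e, he.2]⟩
  · intro e1 h1 e2 h2 heq
    exact Subtype.ext heq
  · intro s hs
    simp only [Finset.mem_filter] at hs
    refine ⟨⟨s, SimpleGraph.mem_edgeFinset.1 hs.1⟩, ?_, rfl⟩
    simp only [Finset.mem_filter, Finset.mem_univ, true_and]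
    exact ⟨hs.2.1, Fin.ext (by rw [hagree ⟨s, SimpleGraph.mem_edgeFinset.1 hs.1⟩]; exact hs.2.2)⟩

/-- Hakimi–Kariv: every bipartite graph is `f`-Class 1. -/
theorem bipartite_isFClassOne [Fintype V] (G : SimpleGraph V) (f : V → ℕ)
    (hf : ∀ v, 0 < f v) (hbip : G.Colorable 2) :
    IsFClassOne G f := by
  classical
  unfold IsFClassOne fChromaticIndex
  have hdub : ∀ v, G.degree v ≤ fDelta G f * f v := by
    intro v
    have h1 : (G.degree v + f v - 1) / f v ≤ fDelta G f := by
      unfold fDelta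
      exact Finset.le_sup (f := fun v => (G.degree v + f v - 1) / f v) (Finset.mem_univ v)
    have h2 := Nat.div_add_mod (G.degree v + f v - 1) (f v)
    have h3 : (G.degree v + f v - 1) % f v < f v := Nat.mod_lt _ (hf v)
    have h4 := hf v
    have h5 : G.degree v ≤ f v * ((G.degree v + f v - 1) / f v) := by omega
    calc G.degree v ≤ f v * ((G.degree v + f v - 1) / f v) := h5
    _ ≤ f v * fDelta G f := Nat.mul_le_mul_left _ h1
    _ = fDelta G f * f v := Nat.mul_comm _ _
  have hmem : ∃ c : G.edgeSet → Fin (fDelta G f), IsFColoring G f c := by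
    obtain ⟨cN, hck, hcb⟩ := lemB G hbip f G.edgeFinset.card G.edgeFinset le_rfl
      (fun s hs => SimpleGraph.mem_edgeFinset.1 hs) (fDelta G f)
      (fun x => by rw [fdeg_edgeFinset]; exact hdub x)
    refine ⟨fun e => ⟨cN e, hck e (SimpleGraph.mem_edgeFinset.2 e.2)⟩, ?_⟩
    intro x α
    rw [colorCount_eq_fcnt G _ cN (fun e => rfl) x α]
    exact hcb x α
  have hlow : ∀ k : ℕ, (∃ c : G.edgeSet → Fin k, IsFColoring G f c) → fDelta G f ≤ k := by
    rintro k ⟨c₀, hc₀⟩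
    unfold fDelta
    apply Finset.sup_le
    intro v _
    set cN : Sym2 V → ℕ := fun s => if h : s ∈ G.edgeSet then (c₀ ⟨s, h⟩ : ℕ) else 0 with hcN
    have hck : ∀ s ∈ G.edgeFinset, cN s < k := by
      intro s hs
      rw [hcN]
      dsimp only
      rw [dif_pos (SimpleGraph.mem_edgeFinset.1 hs)]
      exact (c₀ _).isLt
    have hsum : ∑ γ ∈ Finset.range k, fcnt G.edgeFinset cN v γ = fdeg G.edgeFinset v :=
      fcnt_nat_sum hck v
    have hle : ∀ γ ∈ Finset.range k, fcnt G.edgeFinset cN v γ ≤ f v := by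
      intro γ hγ
      have hγk := Finset.mem_range.1 hγ
      have hfc := hc₀ v ⟨γ, hγk⟩
      rw [colorCount_eq_fcnt G c₀ cN
        (fun e => by rw [hcN]; dsimp only; rw [dif_pos e.2]) v ⟨γ, hγk⟩] at hfc
      exact hfc
    have hdk : G.degree v ≤ k * f v := by
      rw [← fdeg_edgeFinset G v, ← hsum]
      calc ∑ γ ∈ Finset.range k, fcnt G.edgeFinset cN v γ ≤ ∑ _γ ∈ Finset.range k, f v :=
        Finset.sum_le_sum hle
      _ = k * f v := by rw [Finset.sum_const, Finset.card_range, smul_eq_mul]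
    have h2 := Nat.div_add_mod (G.degree v + f v - 1) (f v)
    have h3 : (G.degree v + f v - 1) % f v < f v := Nat.mod_lt _ (hf v)
    have h4 := hf v
    by_contra hq
    push_neg at hq
    have h5 : f v * (k+1) ≤ f v * ((G.degree v + f v - 1) / f v) := Nat.mul_le_mul_left _ hq
    have h6 : f v * (k+1) = f v * k + f v := by ring
    have h7 : f v * k = k * f v := Nat.mul_comm _ _
    omega
  obtain ⟨c, hc⟩ := hmem
  apply le_antisymm
  · exact Nat.sInf_le ⟨c, hc⟩
  · refine le_csInf ⟨fDelta G f, ⟨c, hc⟩⟩ ?_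
    rintro k ⟨c₀, hc₀⟩
    exact hlow k ⟨c₀, hc₀⟩
end

section
/- Let G be a simple finite graph and f : V(G) → ℕ assign a positive integer to each vertex. If f(v) is even for every vertex v ∈ V(G), then G is f-Class 1, i.e., χ'_f(G) = Δ_f(G). -/
set_option maxHeartbeats 2000000
set_option linter.unusedSectionVars false


open Finset
open scoped Classical

variable {V : Type*}

namespace EvenFAux

variable {E : Type*} [Fintype E] [DecidableEq E]

lemma split_card (F M : Finset E) (p : E → Prop) [DecidablePred p] (hMF : M ⊆ F) :
    (F.filter p).card = (M.filter p).card + ((F \ M).filter p).card := by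
  have h1 : F.filter p = (M.filter p) ∪ ((F \ M).filter p) := by
    rw [← filter_union, union_sdiff_of_subset hMF]
  rw [h1, card_union_of_disjoint (disjoint_filter_filter disjoint_sdiff)]

/-- generic swap-counting lemma -/
lemma key_count (F M : Finset E) (p q : E → Prop) [DecidablePred p] [DecidablePred q] (hMF : M ⊆ F)
    (h : ∀ e ∈ F, e ∉ M → (p e ↔ q e)) :
    (F.filter q).card + (M.filter p).card = (F.filter p).card + (M.filter q).card := by
  have hqp : ((F \ M).filter q).card = ((F \ M).filter p).card := by
    congr 1
    apply filter_congr
    intro e he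
    have hm := mem_sdiff.1 he
    exact (h e hm.1 hm.2).symm
  rw [split_card F M p hMF, split_card F M q hMF, hqp]
  ring

lemma card_filter_cons (g : E) (L : List E) (p : E → Prop) [DecidablePred p] (hg : g ∉ L) :
    (((g :: L).toFinset).filter p).card
      = ((L.toFinset).filter p).card + (if p g then 1 else 0) := by
  rw [List.toFinset_cons, filter_insert]
  split
  · rw [card_insert_of_notMem (by simp [hg])]
  · simp

lemma exists_fresh (F : Finset E) (M : List E) (p : E → Prop) [DecidablePred p]
    (hcard : ((M.toFinset).filter p).card < (F.filter p).card) :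
    ∃ e ∈ F, p e ∧ e ∉ M := by
  by_contra hcon
  push_neg at hcon
  have hsub : F.filter p ⊆ M.toFinset.filter p := by
    intro e he
    rw [mem_filter] at he ⊢
    exact ⟨by simpa using hcon e he.1 he.2, he.2⟩
  exact absurd (card_le_card hsub) (by omega)

lemma sub_count_le (F : Finset E) (M : List E) (p : E → Prop) [DecidablePred p]
    (hsub : ∀ e ∈ M, e ∈ F) :
    ((M.toFinset).filter p).card ≤ (F.filter p).card := by
  apply card_le_card
  intro e he
  rw [mem_filter] at he ⊢
  exact ⟨hsub e (by simpa using he.1), he.2⟩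


inductive Dir (S T : E → V) (x : V) : List E → Prop
  | base (g : E) (h : S g = x) : Dir S T x [g]
  | step (g h : E) (L : List E) (prev : Dir S T x (h :: L)) (hlink : S g = T h)
      (hnew : g ∉ h :: L) : Dir S T x (g :: h :: L)

variable {S T : E → V} {x : V}

lemma Dir.nodup {M : List E} (hM : Dir S T x M) : M.Nodup := by
  induction hM with
  | base g h => simp
  | step g h L prev hlink hnew ih => exact List.nodup_cons.2 ⟨hnew, ih⟩

lemma Dir.ne_nil {M : List E} (hM : Dir S T x M) : ∃ g L, M = g :: L := by
  cases hM with
  | base g h => exact ⟨g, [], rfl⟩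
  | step g h L _ _ _ => exact ⟨g, h :: L, rfl⟩

lemma Dir.count {M : List E} (hM : Dir S T x M) {g : E} {L : List E} (hML : M = g :: L) (v : V) :
    (((g :: L).toFinset).filter fun e => S e = v).card + (if T g = v then 1 else 0)
      = (((g :: L).toFinset).filter fun e => T e = v).card + (if x = v then 1 else 0) := by
  induction hM generalizing g L with
  | base g0 h =>
      obtain ⟨rfl, rfl⟩ := List.cons_eq_cons.mp hML.symm
      simp only [List.toFinset_cons, List.toFinset_nil, LawfulSingleton.insert_empty_eq, filter_singleton]
      subst h
      by_cases h1 : S g = v <;> by_cases h2 : T g = v <;>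
        simp [h1, h2, eq_comm] <;> omega
  | step g0 h0 L0 prev hlink hnew ih =>
      obtain ⟨rfl, rfl⟩ := List.cons_eq_cons.mp hML.symm
      specialize ih rfl
      rw [card_filter_cons g (h0 :: L0) _ hnew, card_filter_cons g (h0 :: L0) _ hnew]
      rw [hlink]
      by_cases h1 : T h0 = v <;> by_cases h2 : T g = v <;> simp [h1, h2] at ih ⊢ <;> omega


section Orient
variable [Fintype V] (s₀ t₀ : E → V)

noncomputable def osrc (o : E → Bool) (e : E) : V := if o e then s₀ e else t₀ e
noncomputable def otgt (o : E → Bool) (e : E) : V := if o e then t₀ e else s₀ e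

noncomputable def dOut (o : E → Bool) (v : V) : ℕ :=
  (univ.filter fun e => osrc s₀ t₀ o e = v).card
noncomputable def dIn (o : E → Bool) (v : V) : ℕ :=
  (univ.filter fun e => otgt s₀ t₀ o e = v).card
noncomputable def dTot (v : V) : ℕ :=
  (univ.filter fun e => s₀ e = v).card + (univ.filter fun e => t₀ e = v).card

lemma out_add_in (o : E → Bool) (v : V) : dOut s₀ t₀ o v + dIn s₀ t₀ o v = dTot s₀ t₀ v := by
  unfold dOut dIn dTot
  rw [card_filter, card_filter, card_filter, card_filter, ← sum_add_distrib, ← sum_add_distrib]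
  apply sum_congr rfl
  intro e _
  unfold osrc otgt
  cases h : o e <;> simp <;> omega

noncomputable def Phi (o : E → Bool) : ℕ :=
  ∑ v, ((dOut s₀ t₀ o v - (dTot s₀ t₀ v + 1) / 2) + (dTot s₀ t₀ v / 2 - dOut s₀ t₀ o v))

lemma osrc_rev (o : E → Bool) : osrc s₀ t₀ (fun e => !(o e)) = otgt s₀ t₀ o := by
  funext e; unfold osrc otgt; cases h : o e <;> simp [h]

lemma Phi_rev (o : E → Bool) : Phi s₀ t₀ (fun e => !(o e)) = Phi s₀ t₀ o := by
  unfold Phi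
  apply sum_congr rfl
  intro v _
  have h1 : dOut s₀ t₀ (fun e => !(o e)) v = dIn s₀ t₀ o v := by
    unfold dOut dIn; rw [osrc_rev]
  have h2 := out_add_in s₀ t₀ o v
  have h3 : dTot s₀ t₀ v / 2 + (dTot s₀ t₀ v + 1) / 2 = dTot s₀ t₀ v := by omega
  omega

lemma flip_lemma (o : E → Bool) (x : V) (hx : (dTot s₀ t₀ x + 1) / 2 < dOut s₀ t₀ o x) :
    ∃ o', Phi s₀ t₀ o' < Phi s₀ t₀ o := by
  have hex : ∃ g : E, osrc s₀ t₀ o g = x := by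
    have h1 : 0 < dOut s₀ t₀ o x := by omega
    rw [dOut, card_pos] at h1
    obtain ⟨g, hg⟩ := h1
    exact ⟨g, (mem_filter.1 hg).2⟩
  have claim : ∃ g L, Dir (osrc s₀ t₀ o) (otgt s₀ t₀ o) x (g :: L) ∧
      ∀ e, osrc s₀ t₀ o e = otgt s₀ t₀ o g → e ∈ g :: L := by
    by_contra hcon
    push_neg at hcon
    have grow : ∀ n : ℕ, ∃ M, Dir (osrc s₀ t₀ o) (otgt s₀ t₀ o) x M ∧ n ≤ M.length := by
      intro n
      induction n with
      | zero => exact ⟨[hex.choose], Dir.base _ hex.choose_spec, by simp⟩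
      | succ n ih =>
          obtain ⟨M, hM, hlen⟩ := ih
          obtain ⟨g, L, rfl⟩ := hM.ne_nil
          obtain ⟨e, he, hen⟩ := hcon g L hM
          refine ⟨e :: g :: L, Dir.step e g L hM he hen, ?_⟩
          simp only [List.length_cons] at hlen ⊢
          omega
    obtain ⟨M, hM, hlen⟩ := grow (Fintype.card E + 1)
    have := hM.nodup.length_le_card
    omega
  obtain ⟨g, L, hM, hstuck⟩ := claim
  have hcnt := hM.count rfl
  have hstuckcard : dOut s₀ t₀ o (otgt s₀ t₀ o g)
      ≤ ((g :: L).toFinset.filter fun e => osrc s₀ t₀ o e = otgt s₀ t₀ o g).card := by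
    apply card_le_card
    intro e he
    rw [mem_filter] at he
    rw [mem_filter]
    exact ⟨List.mem_toFinset.2 (hstuck e he.2), he.2⟩
  have hTle : ∀ v, ((g :: L).toFinset.filter fun e => otgt s₀ t₀ o e = v).card
      ≤ dIn s₀ t₀ o v := by
    intro v
    exact sub_count_le univ (g :: L) _ (fun e _ => mem_univ e)
  have hoi := out_add_in s₀ t₀ o
  have hzx : otgt s₀ t₀ o g ≠ x := by
    intro h
    have h1 := hcnt x
    rw [if_pos h, if_pos rfl] at h1
    rw [h] at hstuckcard
    have h2 := hTle x
    have h3 := hoi x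
    omega
  have h1 := hcnt (otgt s₀ t₀ o g)
  rw [if_pos rfl, if_neg (fun hh => hzx hh.symm)] at h1
  have hzout : dOut s₀ t₀ o (otgt s₀ t₀ o g) + 1 ≤ dIn s₀ t₀ o (otgt s₀ t₀ o g) := by
    have := hTle (otgt s₀ t₀ o g); omega
  refine ⟨fun e => if e ∈ (g :: L) then !(o e) else o e, ?_⟩
  set o' : E → Bool := fun e => if e ∈ (g :: L) then !(o e) else o e with ho'
  have hkey : ∀ v, dOut s₀ t₀ o' v
        + ((g :: L).toFinset.filter fun e => osrc s₀ t₀ o e = v).card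
      = dOut s₀ t₀ o v + ((g :: L).toFinset.filter fun e => otgt s₀ t₀ o e = v).card := by
    intro v
    have h2 := key_count univ (g :: L).toFinset (fun e => osrc s₀ t₀ o e = v)
      (fun e => osrc s₀ t₀ o' e = v) (subset_univ _) ?_
    · have h3 : ((g :: L).toFinset.filter fun e => osrc s₀ t₀ o' e = v)
          = (g :: L).toFinset.filter fun e => otgt s₀ t₀ o e = v := by
        apply filter_congr
        intro e he
        simp only [List.mem_toFinset] at he
        have he2 : o' e = !(o e) := by rw [ho']; simp [he]
        simp only [osrc, otgt, he2]
        cases h : o e <;> simp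
      rw [h3] at h2
      unfold dOut
      omega
    · intro e _ heM
      simp only [List.mem_toFinset] at heM
      have he2 : o' e = o e := by rw [ho']; simp [heM]
      simp only [osrc, he2]
  have hdelta : ∀ v, dOut s₀ t₀ o' v + (if x = v then 1 else 0)
      = dOut s₀ t₀ o v + (if otgt s₀ t₀ o g = v then 1 else 0) := by
    intro v
    have h2 := hkey v
    have h3 := hcnt v
    omega
  unfold Phi
  apply sum_lt_sum
  · intro v _
    have h2 := hdelta v
    by_cases hvx : x = v
    · subst hvx
      rw [if_pos rfl, if_neg (fun hh => hzx hh)] at h2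
      omega
    · by_cases hvz : otgt s₀ t₀ o g = v
      · subst hvz
        rw [if_neg hvx, if_pos rfl] at h2
        have h4 := hoi (otgt s₀ t₀ o g)
        omega
      · rw [if_neg hvx, if_neg hvz] at h2
        omega
  · refine ⟨x, mem_univ x, ?_⟩
    have h2 := hdelta x
    rw [if_pos rfl, if_neg (fun hh => hzx hh)] at h2
    omega

theorem orient_exists :
    ∃ o : E → Bool, ∀ v, dOut s₀ t₀ o v ≤ (dTot s₀ t₀ v + 1) / 2
      ∧ dIn s₀ t₀ o v ≤ (dTot s₀ t₀ v + 1) / 2 := by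
  suffices h : ∀ (n : ℕ) (o : E → Bool), Phi s₀ t₀ o ≤ n →
      ∃ o : E → Bool, ∀ v, dOut s₀ t₀ o v ≤ (dTot s₀ t₀ v + 1) / 2
        ∧ dIn s₀ t₀ o v ≤ (dTot s₀ t₀ v + 1) / 2 by
    exact h (Phi s₀ t₀ (fun _ => true)) _ le_rfl
  intro n
  induction n with
  | zero =>
      intro o ho
      refine ⟨o, fun v => ?_⟩
      have h1 : ∀ v ∈ (univ : Finset V),
          (dOut s₀ t₀ o v - (dTot s₀ t₀ v + 1) / 2) + (dTot s₀ t₀ v / 2 - dOut s₀ t₀ o v) = 0 := by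
        intro v _
        have := sum_eq_zero_iff.1 (Nat.le_zero.1 ho) v (mem_univ v)
        omega
      have h2 := h1 v (mem_univ v)
      have h3 := out_add_in s₀ t₀ o v
      constructor <;> omega
  | succ n ih =>
      intro o ho
      by_cases h0 : Phi s₀ t₀ o = 0
      · exact ih o (by omega)
      · -- some vertex has excess
        have hex : ∃ v, (dTot s₀ t₀ v + 1) / 2 < dOut s₀ t₀ o v ∨
            (dTot s₀ t₀ v + 1) / 2 < dIn s₀ t₀ o v := by
          by_contra hcon
          push_neg at hcon
          apply h0
          apply sum_eq_zero
          intro v _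
          have h1 := hcon v
          have h2 := out_add_in s₀ t₀ o v
          omega
        obtain ⟨v, hv | hv⟩ := hex
        · obtain ⟨o', ho'⟩ := flip_lemma s₀ t₀ o v hv
          exact ih o' (by omega)
        · have hrev : dOut s₀ t₀ (fun e => !(o e)) v = dIn s₀ t₀ o v := by
            unfold dOut dIn; rw [osrc_rev]
          obtain ⟨o', ho'⟩ := flip_lemma s₀ t₀ (fun e => !(o e)) v (by rw [hrev]; exact hv)
          have := Phi_rev s₀ t₀ o
          exact ih o' (by omega)

end Orient

lemma card_filter_insert (F' : Finset E) (e₀ : E) (he : e₀ ∉ F') (p : E → Prop) [DecidablePred p] :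
    ((insert e₀ F').filter p).card = (F'.filter p).card + (if p e₀ then 1 else 0) := by
  rw [filter_insert]
  split
  · rw [card_insert_of_notMem (fun h => he (mem_of_mem_filter e₀ h))]
  · simp


section Bip2
variable {K : Type*} [Fintype K]
variable (s t : E → V)

noncomputable def cS (F : Finset E) (c : E → K) (v : V) (γ : K) : ℕ :=
  (F.filter fun e => s e = v ∧ c e = γ).card
noncomputable def cT (F : Finset E) (c : E → K) (v : V) (γ : K) : ℕ :=
  (F.filter fun e => t e = v ∧ c e = γ).card

inductive Alt (c : E → K) (α β : K) (y : V) (F' : Finset E) : List E → Prop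
  | base (g : E) (hgF : g ∈ F') (hc : c g = α) (ht : t g = y) : Alt c α β y F' [g]
  | stepS (g h : E) (L : List E) (prev : Alt c α β y F' (h :: L))
      (hodd : (h :: L).length % 2 = 1) (hgF : g ∈ F') (hnew : g ∉ h :: L)
      (hc : c g = β) (hs : s g = s h) : Alt c α β y F' (g :: h :: L)
  | stepT (g h : E) (L : List E) (prev : Alt c α β y F' (h :: L))
      (heven : (h :: L).length % 2 = 0) (hgF : g ∈ F') (hnew : g ∉ h :: L)
      (hc : c g = α) (ht : t g = t h) : Alt c α β y F' (g :: h :: L)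

variable {s t} {c : E → K} {α β : K} {y : V} {F' : Finset E}

lemma Alt.nodup {M : List E} (hM : Alt s t c α β y F' M) : M.Nodup := by
  induction hM with
  | base g hgF hc ht => simp
  | stepS g h L prev hodd hgF hnew hc hs ih => exact List.nodup_cons.2 ⟨hnew, ih⟩
  | stepT g h L prev heven hgF hnew hc ht ih => exact List.nodup_cons.2 ⟨hnew, ih⟩

lemma Alt.subF {M : List E} (hM : Alt s t c α β y F' M) : ∀ e ∈ M, e ∈ F' := by
  induction hM with
  | base g hgF hc ht => intro e he; simp at he; subst he; exact hgF
  | stepS g h L prev hodd hgF hnew hc hs ih =>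
      intro e he
      rcases List.mem_cons.1 he with h1 | h1
      · subst h1; exact hgF
      · exact ih e h1
  | stepT g h L prev heven hgF hnew hc ht ih =>
      intro e he
      rcases List.mem_cons.1 he with h1 | h1
      · subst h1; exact hgF
      · exact ih e h1

lemma Alt.colors {M : List E} (hM : Alt s t c α β y F' M) : ∀ e ∈ M, c e = α ∨ c e = β := by
  induction hM with
  | base g hgF hc ht => intro e he; simp at he; subst he; exact Or.inl hc
  | stepS g h L prev hodd hgF hnew hc hs ih =>
      intro e he
      rcases List.mem_cons.1 he with h1 | h1
      · subst h1; exact Or.inr hc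
      · exact ih e h1
  | stepT g h L prev heven hgF hnew hc ht ih =>
      intro e he
      rcases List.mem_cons.1 he with h1 | h1
      · subst h1; exact Or.inl hc
      · exact ih e h1

lemma Alt.ne_nil {M : List E} (hM : Alt s t c α β y F' M) : ∃ g L, M = g :: L := by
  cases hM with
  | base g hgF hc ht => exact ⟨g, [], rfl⟩
  | stepS g h L _ _ _ _ _ _ => exact ⟨g, h :: L, rfl⟩
  | stepT g h L _ _ _ _ _ _ => exact ⟨g, h :: L, rfl⟩

lemma Alt.countS (hab : α ≠ β) {M : List E} (hM : Alt s t c α β y F' M) {g : E} {L : List E}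
    (hML : M = g :: L) (v : V) :
    ((g :: L).toFinset.filter fun e => s e = v ∧ c e = α).card
      = ((g :: L).toFinset.filter fun e => s e = v ∧ c e = β).card
        + (if (g :: L).length % 2 = 1 then (if s g = v then 1 else 0) else 0) := by
  induction hM generalizing g L with
  | base g0 hgF hc ht =>
      obtain ⟨rfl, rfl⟩ := List.cons_eq_cons.mp hML.symm
      rw [card_filter_cons g [] _ (List.not_mem_nil (a := g)), card_filter_cons g [] _ (List.not_mem_nil (a := g))]
      rw [if_pos (show ([g] : List E).length % 2 = 1 by simp)]
      by_cases h1 : s g = v <;> simp [h1, hc, hab]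
  | stepS g0 h0 L0 prev hodd hgF hnew hc hs ih =>
      obtain ⟨rfl, rfl⟩ := List.cons_eq_cons.mp hML.symm
      specialize ih rfl
      rw [card_filter_cons g (h0 :: L0) _ hnew, card_filter_cons g (h0 :: L0) _ hnew]
      rw [if_pos hodd] at ih
      rw [if_neg (show ¬ ((g :: h0 :: L0).length % 2 = 1) by
        simp only [List.length_cons] at hodd ⊢; omega)]
      have e1 : (if s g = v ∧ c g = α then 1 else 0) = 0 := by
        simp [hc, hab.symm]
      have e2 : (if s g = v ∧ c g = β then 1 else 0) = (if s g = v then 1 else 0) := by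
        by_cases h1 : s g = v <;> simp [h1, hc]
      rw [e1, e2, hs]
      omega
  | stepT g0 h0 L0 prev heven hgF hnew hc ht ih =>
      obtain ⟨rfl, rfl⟩ := List.cons_eq_cons.mp hML.symm
      specialize ih rfl
      rw [card_filter_cons g (h0 :: L0) _ hnew, card_filter_cons g (h0 :: L0) _ hnew]
      rw [if_neg (by omega)] at ih
      rw [if_pos (show (g :: h0 :: L0).length % 2 = 1 by
        simp only [List.length_cons] at heven ⊢; omega)]
      have e1 : (if s g = v ∧ c g = β then 1 else 0) = 0 := by
        simp [hc, hab]
      have e2 : (if s g = v ∧ c g = α then 1 else 0) = (if s g = v then 1 else 0) := by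
        by_cases h1 : s g = v <;> simp [h1, hc]
      rw [e1, e2]
      omega

/-- target-count invariant -/
lemma Alt.countT (hab : α ≠ β) {M : List E} (hM : Alt s t c α β y F' M) {g : E} {L : List E}
    (hML : M = g :: L) (v : V) :
    ((g :: L).toFinset.filter fun e => t e = v ∧ c e = α).card
        + (if (g :: L).length % 2 = 1 then 0 else (if t g = v then 1 else 0))
      = ((g :: L).toFinset.filter fun e => t e = v ∧ c e = β).card
        + (if y = v then 1 else 0) := by
  induction hM generalizing g L with
  | base g0 hgF hc ht =>
      obtain ⟨rfl, rfl⟩ := List.cons_eq_cons.mp hML.symm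
      rw [card_filter_cons g [] _ (List.not_mem_nil (a := g)), card_filter_cons g [] _ (List.not_mem_nil (a := g))]
      rw [if_pos (show ([g] : List E).length % 2 = 1 by simp)]
      subst ht
      by_cases h1 : t g = v <;> simp [h1, hc, hab, eq_comm]
  | stepS g0 h0 L0 prev hodd hgF hnew hc hs ih =>
      obtain ⟨rfl, rfl⟩ := List.cons_eq_cons.mp hML.symm
      specialize ih rfl
      rw [card_filter_cons g (h0 :: L0) _ hnew, card_filter_cons g (h0 :: L0) _ hnew]
      rw [if_pos hodd] at ih
      rw [if_neg (show ¬ ((g :: h0 :: L0).length % 2 = 1) by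
        simp only [List.length_cons] at hodd ⊢; omega)]
      have e1 : (if t g = v ∧ c g = α then 1 else 0) = 0 := by
        simp [hc, hab.symm]
      have e2 : (if t g = v ∧ c g = β then 1 else 0) = (if t g = v then 1 else 0) := by
        by_cases h1 : t g = v <;> simp [h1, hc]
      rw [e1, e2]
      omega
  | stepT g0 h0 L0 prev heven hgF hnew hc ht ih =>
      obtain ⟨rfl, rfl⟩ := List.cons_eq_cons.mp hML.symm
      specialize ih rfl
      rw [card_filter_cons g (h0 :: L0) _ hnew, card_filter_cons g (h0 :: L0) _ hnew]
      rw [if_neg (by omega)] at ih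
      rw [if_pos (show (g :: h0 :: L0).length % 2 = 1 by
        simp only [List.length_cons] at heven ⊢; omega)]
      have e1 : (if t g = v ∧ c g = β then 1 else 0) = 0 := by
        simp [hc, hab]
      have e2 : (if t g = v ∧ c g = α then 1 else 0) = (if t g = v then 1 else 0) := by
        by_cases h1 : t g = v <;> simp [h1, hc]
      rw [e1, e2, ht]
      by_cases h1 : t h0 = v <;> simp only [h1, if_pos, if_neg, if_true, if_false] at ih ⊢ <;> omega

end Bip2

section Bip3
variable {K : Type*} [Fintype K]

theorem bip [Nonempty K] (s t : E → V) (a b : V → ℕ) (F : Finset E)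
    (hS : ∀ v, (F.filter fun e => s e = v).card ≤ Fintype.card K * a v)
    (hT : ∀ v, (F.filter fun e => t e = v).card ≤ Fintype.card K * b v) :
    ∃ c : E → K, ∀ v (γ : K),
      ((F.filter fun e => s e = v ∧ c e = γ).card ≤ a v)
      ∧ ((F.filter fun e => t e = v ∧ c e = γ).card ≤ b v) := by
  revert hS hT
  induction F using Finset.strongInduction with
  | _ F ih =>
  intro hS hT
  rcases F.eq_empty_or_nonempty with rfl | ⟨e₀, he₀⟩
  · exact ⟨fun _ => Classical.arbitrary K, by simp⟩
  -- apply IH to F.erase e₀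
  obtain ⟨c, hc⟩ := ih (F.erase e₀) (erase_ssubset he₀)
    (fun v => le_trans (card_le_card (filter_subset_filter _ (erase_subset _ _))) (hS v))
    (fun v => le_trans (card_le_card (filter_subset_filter _ (erase_subset _ _))) (hT v))
  have hcS : ∀ v (γ : K), ((F.erase e₀).filter fun e => s e = v ∧ c e = γ).card ≤ a v :=
    fun v γ => (hc v γ).1
  have hcT : ∀ v (γ : K), ((F.erase e₀).filter fun e => t e = v ∧ c e = γ).card ≤ b v :=
    fun v γ => (hc v γ).2
  have hF : insert e₀ (F.erase e₀) = F := insert_erase he₀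
  have he₀' : e₀ ∉ F.erase e₀ := notMem_erase e₀ F
  -- generic: counting after inserting e₀ with updated coloring
  have hins : ∀ (c₂ : E → K) (u : E → V) (v : V) (γ δ : K),
      (F.filter fun e => u e = v ∧ Function.update c₂ e₀ δ e = γ).card
        = ((F.erase e₀).filter fun e => u e = v ∧ c₂ e = γ).card
          + (if u e₀ = v ∧ δ = γ then 1 else 0) := by
    intro c₂ u v γ δ
    have h1 := card_filter_insert (F.erase e₀) e₀ he₀'
      (p := fun e => u e = v ∧ Function.update c₂ e₀ δ e = γ)
    rw [hF] at h1
    rw [h1]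
    congr 1
    · apply congrArg
      apply filter_congr
      intro e he
      have hne : e ≠ e₀ := fun h => he₀' (h ▸ he)
      rw [Function.update_of_ne hne]
    · rw [Function.update_self]
  -- pigeonhole at s e₀
  have hpigeonS : ∃ γ : K, ((F.erase e₀).filter fun e => s e = s e₀ ∧ c e = γ).card < a (s e₀) := by
    by_contra hcon
    push_neg at hcon
    have hsum : ((F.erase e₀).filter fun e => s e = s e₀).card
        = ∑ γ : K, ((F.erase e₀).filter fun e => s e = s e₀ ∧ c e = γ).card := by
      rw [card_eq_sum_card_fiberwise (f := c) (t := univ) (fun e _ => mem_univ _)]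
      exact sum_congr rfl fun γ _ => congrArg card (by rw [filter_filter])
    have h2 : ((F.erase e₀).filter fun e => s e = s e₀).card
        = (F.filter fun e => s e = s e₀).card - 1 := by
      rw [filter_erase, card_erase_of_mem
        (s := F.filter fun e => s e = s e₀) (mem_filter.2 ⟨he₀, rfl⟩)]
    have h3 := hS (s e₀)
    have h4 : 0 < (F.filter fun e => s e = s e₀).card :=
      card_pos.2 ⟨e₀, mem_filter.2 ⟨he₀, rfl⟩⟩
    have h5 : Fintype.card K * a (s e₀)
        ≤ ∑ γ : K, ((F.erase e₀).filter fun e => s e = s e₀ ∧ c e = γ).card := by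
      calc Fintype.card K * a (s e₀) = ∑ _γ : K, a (s e₀) := by
            rw [sum_const, card_univ, smul_eq_mul]
        _ ≤ _ := sum_le_sum fun γ _ => hcon γ
    omega
  have hpigeonT : ∃ γ : K, ((F.erase e₀).filter fun e => t e = t e₀ ∧ c e = γ).card < b (t e₀) := by
    by_contra hcon
    push_neg at hcon
    have hsum : ((F.erase e₀).filter fun e => t e = t e₀).card
        = ∑ γ : K, ((F.erase e₀).filter fun e => t e = t e₀ ∧ c e = γ).card := by
      rw [card_eq_sum_card_fiberwise (f := c) (t := univ) (fun e _ => mem_univ _)]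
      exact sum_congr rfl fun γ _ => congrArg card (by rw [filter_filter])
    have h2 : ((F.erase e₀).filter fun e => t e = t e₀).card
        = (F.filter fun e => t e = t e₀).card - 1 := by
      rw [filter_erase, card_erase_of_mem
        (s := F.filter fun e => t e = t e₀) (mem_filter.2 ⟨he₀, rfl⟩)]
    have h3 := hT (t e₀)
    have h4 : 0 < (F.filter fun e => t e = t e₀).card :=
      card_pos.2 ⟨e₀, mem_filter.2 ⟨he₀, rfl⟩⟩
    have h5 : Fintype.card K * b (t e₀)
        ≤ ∑ γ : K, ((F.erase e₀).filter fun e => t e = t e₀ ∧ c e = γ).card := by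
      calc Fintype.card K * b (t e₀) = ∑ _γ : K, b (t e₀) := by
            rw [sum_const, card_univ, smul_eq_mul]
        _ ≤ _ := sum_le_sum fun γ _ => hcon γ
    omega
  by_cases hcom : ∃ γ : K, ((F.erase e₀).filter fun e => s e = s e₀ ∧ c e = γ).card < a (s e₀)
      ∧ ((F.erase e₀).filter fun e => t e = t e₀ ∧ c e = γ).card < b (t e₀)
  · -- easy case: common free color
    obtain ⟨γ0, hγ1, hγ2⟩ := hcom
    refine ⟨Function.update c e₀ γ0, fun v γ => ⟨?_, ?_⟩⟩
    · rw [hins c s v γ γ0]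
      by_cases hv : s e₀ = v ∧ γ0 = γ
      · rw [if_pos hv]
        obtain ⟨hv1, rfl⟩ := hv
        subst hv1
        omega
      · rw [if_neg hv]
        exact hcS v γ
    · rw [hins c t v γ γ0]
      by_cases hv : t e₀ = v ∧ γ0 = γ
      · rw [if_pos hv]
        obtain ⟨hv1, rfl⟩ := hv
        subst hv1
        omega
      · rw [if_neg hv]
        exact hcT v γ
  · -- hard case
    push_neg at hcom
    obtain ⟨α, hα⟩ := hpigeonS
    obtain ⟨β, hβ⟩ := hpigeonT
    have hyα : ((F.erase e₀).filter fun e => t e = t e₀ ∧ c e = α).card = b (t e₀) :=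
      le_antisymm (hcT _ _) (hcom α hα)
    have hab : α ≠ β := by
      intro h
      rw [← h] at hβ
      omega
    have hb1 : 0 < b (t e₀) := by
      have h4 : 0 < (F.filter fun e => t e = t e₀).card :=
        card_pos.2 ⟨e₀, mem_filter.2 ⟨he₀, rfl⟩⟩
      have h3 := hT (t e₀)
      rcases Nat.eq_zero_or_pos (b (t e₀)) with h | h
      · rw [h, Nat.mul_zero] at h3; omega
      · exact h
    -- stuck alternating trail
    have claim : ∃ g L, Alt s t c α β (t e₀) (F.erase e₀) (g :: L) ∧
        (((g :: L).length % 2 = 1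
            ∧ ((F.erase e₀).filter fun e => s e = s g ∧ c e = β).card < a (s g)) ∨
         ((g :: L).length % 2 = 0 ∧ t g ≠ t e₀
            ∧ ((F.erase e₀).filter fun e => t e = t g ∧ c e = α).card < b (t g))) := by
      by_contra hcon
      have grow : ∀ n : ℕ, ∃ M, Alt s t c α β (t e₀) (F.erase e₀) M ∧ n ≤ M.length := by
        intro n
        induction n with
        | zero =>
            have h4 : 0 < ((F.erase e₀).filter fun e => t e = t e₀ ∧ c e = α).card := by omega
            obtain ⟨g1, hg1⟩ := card_pos.1 h4
            rw [mem_filter] at hg1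
            exact ⟨[g1], Alt.base g1 hg1.1 hg1.2.2 hg1.2.1, by simp⟩
        | succ n ihn =>
            obtain ⟨M, hM, hlen⟩ := ihn
            obtain ⟨g, L, rfl⟩ := hM.ne_nil
            by_cases hodd : (g :: L).length % 2 = 1
            · by_cases hfree : ((F.erase e₀).filter fun e => s e = s g ∧ c e = β).card < a (s g)
              · exact absurd ⟨g, L, hM, Or.inl ⟨hodd, hfree⟩⟩ hcon
              · have hcnt := hM.countS hab rfl (s g)
                rw [if_pos hodd, if_pos rfl] at hcnt
                have hle := sub_count_le (F.erase e₀) (g :: L)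
                  (fun e => s e = s g ∧ c e = α) hM.subF
                have h6 := hcS (s g) α
                have hfresh : ((g :: L).toFinset.filter fun e => s e = s g ∧ c e = β).card
                    < ((F.erase e₀).filter fun e => s e = s g ∧ c e = β).card := by omega
                obtain ⟨e, heF, hpe, heM⟩ := exists_fresh _ _ _ hfresh
                refine ⟨e :: g :: L, Alt.stepS e g L hM hodd heF heM hpe.2 hpe.1, ?_⟩
                simp only [List.length_cons] at hlen ⊢
                omega
            · have heven : (g :: L).length % 2 = 0 := by omega
              by_cases hty : t g = t e₀
              · have hcnt := hM.countT hab rfl (t e₀)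
                rw [if_neg (by omega), if_pos hty, if_pos rfl] at hcnt
                have hle := sub_count_le (F.erase e₀) (g :: L)
                  (fun e => t e = t e₀ ∧ c e = β) hM.subF
                have hfresh : ((g :: L).toFinset.filter fun e => t e = t e₀ ∧ c e = α).card
                    < ((F.erase e₀).filter fun e => t e = t e₀ ∧ c e = α).card := by omega
                obtain ⟨e, heF, hpe, heM⟩ := exists_fresh _ _ _ hfresh
                refine ⟨e :: g :: L,
                  Alt.stepT e g L hM heven heF heM hpe.2 (hpe.1.trans hty.symm), ?_⟩
                simp only [List.length_cons] at hlen ⊢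
                omega
              · by_cases hfree : ((F.erase e₀).filter fun e => t e = t g ∧ c e = α).card < b (t g)
                · exact absurd ⟨g, L, hM, Or.inr ⟨heven, hty, hfree⟩⟩ hcon
                · have hcnt := hM.countT hab rfl (t g)
                  rw [if_neg (by omega), if_pos rfl, if_neg (fun h => hty h.symm)] at hcnt
                  have hle := sub_count_le (F.erase e₀) (g :: L)
                    (fun e => t e = t g ∧ c e = β) hM.subF
                  have h6 := hcT (t g) β
                  have hfresh : ((g :: L).toFinset.filter fun e => t e = t g ∧ c e = α).card
                      < ((F.erase e₀).filter fun e => t e = t g ∧ c e = α).card := by omega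
                  obtain ⟨e, heF, hpe, heM⟩ := exists_fresh _ _ _ hfresh
                  refine ⟨e :: g :: L, Alt.stepT e g L hM heven heF heM hpe.2 hpe.1, ?_⟩
                  simp only [List.length_cons] at hlen ⊢
                  omega
      obtain ⟨M, hM, hlen⟩ := grow (Fintype.card E + 1)
      have := hM.nodup.length_le_card
      omega
    obtain ⟨g, L, hM, hstop⟩ := claim
    set c₂ : E → K := fun e => if e ∈ (g :: L) then (if c e = α then β else α) else c e
      with hc₂def
    have hMF : (g :: L).toFinset ⊆ F.erase e₀ :=
      fun e he => hM.subF e (List.mem_toFinset.1 he)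
    have hoffM : ∀ e, e ∉ (g :: L).toFinset → c₂ e = c e := by
      intro e heM
      have hel : e ∉ (g :: L) := fun h => heM (List.mem_toFinset.2 h)
      simp only [hc₂def]
      rw [if_neg hel]
    have honM : ∀ e ∈ (g :: L).toFinset, c₂ e = if c e = α then β else α := by
      intro e heM
      have hel : e ∈ (g :: L) := List.mem_toFinset.1 heM
      simp only [hc₂def]
      rw [if_pos hel]
    have hswapA : ∀ (u : E → V) (v : V),
        ((F.erase e₀).filter fun e => u e = v ∧ c₂ e = α).card
          + ((g :: L).toFinset.filter fun e => u e = v ∧ c e = α).card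
        = ((F.erase e₀).filter fun e => u e = v ∧ c e = α).card
          + ((g :: L).toFinset.filter fun e => u e = v ∧ c e = β).card := by
      intro u v
      have h8 := key_count (F.erase e₀) (g :: L).toFinset
        (fun e => u e = v ∧ c e = α) (fun e => u e = v ∧ c₂ e = α) hMF
        (fun e heF heM => by simp only [hoffM e heM])
      have h9 : ((g :: L).toFinset.filter fun e => u e = v ∧ c₂ e = α)
          = ((g :: L).toFinset.filter fun e => u e = v ∧ c e = β) := by
        apply filter_congr
        intro e he
        rw [honM e he]
        rcases hM.colors e (List.mem_toFinset.1 he) with h | h <;>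
          simp [h, hab, hab.symm]
      rw [h9] at h8
      omega
    have hswapB : ∀ (u : E → V) (v : V),
        ((F.erase e₀).filter fun e => u e = v ∧ c₂ e = β).card
          + ((g :: L).toFinset.filter fun e => u e = v ∧ c e = β).card
        = ((F.erase e₀).filter fun e => u e = v ∧ c e = β).card
          + ((g :: L).toFinset.filter fun e => u e = v ∧ c e = α).card := by
      intro u v
      have h8 := key_count (F.erase e₀) (g :: L).toFinset
        (fun e => u e = v ∧ c e = β) (fun e => u e = v ∧ c₂ e = β) hMF
        (fun e heF heM => by simp only [hoffM e heM])
      have h9 : ((g :: L).toFinset.filter fun e => u e = v ∧ c₂ e = β)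
          = ((g :: L).toFinset.filter fun e => u e = v ∧ c e = α) := by
        apply filter_congr
        intro e he
        rw [honM e he]
        rcases hM.colors e (List.mem_toFinset.1 he) with h | h <;>
          simp [h, hab, hab.symm]
      rw [h9] at h8
      omega
    have hswapO : ∀ (u : E → V) (v : V) (γ : K), γ ≠ α → γ ≠ β →
        ((F.erase e₀).filter fun e => u e = v ∧ c₂ e = γ).card
          = ((F.erase e₀).filter fun e => u e = v ∧ c e = γ).card := by
      intro u v γ hga hgb
      apply congrArg
      apply filter_congr
      intro e he
      by_cases heM : e ∈ (g :: L).toFinset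
      · rw [honM e heM]
        rcases hM.colors e (List.mem_toFinset.1 heM) with h | h <;>
          simp [h, hga.symm, hgb.symm, hab, hab.symm]
      · rw [hoffM e heM]
    refine ⟨Function.update c₂ e₀ α, fun v γ => ⟨?_, ?_⟩⟩
    · -- source side
      rw [hins c₂ s v γ α]
      rcases hstop with ⟨hodd, hzfree⟩ | ⟨heven, hwy, hwfree⟩
      · have hcnt := hM.countS hab rfl v
        rw [if_pos hodd] at hcnt
        by_cases hga : α = γ
        · subst hga
          have h8 := hswapA s v
          by_cases hv : s e₀ = v
          · subst hv
            rw [if_pos ⟨rfl, rfl⟩]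
            omega
          · rw [if_neg (fun h => hv h.1)]
            have h10 := hcS v α
            omega
        · by_cases hgb : β = γ
          · subst hgb
            have h8 := hswapB s v
            rw [if_neg (fun h => hab h.2)]
            by_cases hv : s g = v
            · subst hv
              rw [if_pos rfl] at hcnt
              omega
            · rw [if_neg hv] at hcnt
              have h10 := hcS v β
              omega
          · rw [if_neg (fun h => hga h.2), hswapO s v γ (fun h => hga h.symm) (fun h => hgb h.symm)]
            exact hcS v γ
      · have hcnt := hM.countS hab rfl v
        rw [if_neg (by omega)] at hcnt
        by_cases hga : α = γ
        · subst hga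
          have h8 := hswapA s v
          by_cases hv : s e₀ = v
          · subst hv
            rw [if_pos ⟨rfl, rfl⟩]
            omega
          · rw [if_neg (fun h => hv h.1)]
            have h10 := hcS v α
            omega
        · by_cases hgb : β = γ
          · subst hgb
            rw [if_neg (fun h => hab h.2)]
            have h8 := hswapB s v
            have h10 := hcS v β
            omega
          · rw [if_neg (fun h => hga h.2), hswapO s v γ (fun h => hga h.symm) (fun h => hgb h.symm)]
            exact hcS v γ
    · -- target side
      rw [hins c₂ t v γ α]
      rcases hstop with ⟨hodd, hzfree⟩ | ⟨heven, hwy, hwfree⟩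
      · have hcnt := hM.countT hab rfl v
        rw [if_pos hodd] at hcnt
        by_cases hga : α = γ
        · subst hga
          have h8 := hswapA t v
          by_cases hv : t e₀ = v
          · subst hv
            rw [if_pos ⟨rfl, rfl⟩]
            rw [if_pos rfl] at hcnt
            have h10 := hcT (t e₀) α
            omega
          · rw [if_neg (fun h => hv h.1)]
            rw [if_neg hv] at hcnt
            have h10 := hcT v α
            omega
        · by_cases hgb : β = γ
          · subst hgb
            rw [if_neg (fun h => hab h.2)]
            have h8 := hswapB t v
            by_cases hv : t e₀ = v
            · subst hv
              rw [if_pos rfl] at hcnt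
              omega
            · rw [if_neg hv] at hcnt
              have h10 := hcT v β
              omega
          · rw [if_neg (fun h => hga h.2), hswapO t v γ (fun h => hga h.symm) (fun h => hgb h.symm)]
            exact hcT v γ
      · have hcnt := hM.countT hab rfl v
        rw [if_neg (by omega)] at hcnt
        by_cases hga : α = γ
        · subst hga
          have h8 := hswapA t v
          by_cases hv : t e₀ = v
          · subst hv
            rw [if_pos ⟨rfl, rfl⟩]
            rw [if_neg hwy, if_pos rfl] at hcnt
            have h10 := hcT (t e₀) α
            omega
          · rw [if_neg (fun h => hv h.1)]
            by_cases hw : t g = v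
            · subst hw
              rw [if_pos rfl, if_neg (fun h => hv h)] at hcnt
              omega
            · rw [if_neg hw, if_neg hv] at hcnt
              have h10 := hcT v α
              omega
        · by_cases hgb : β = γ
          · subst hgb
            rw [if_neg (fun h => hab h.2)]
            have h8 := hswapB t v
            by_cases hv : t e₀ = v
            · subst hv
              rw [if_neg hwy, if_pos rfl] at hcnt
              omega
            · by_cases hw : t g = v
              · subst hw
                rw [if_pos rfl, if_neg (fun h => hv h)] at hcnt
                have h10 := hcT (t g) β
                omega
              · rw [if_neg hw, if_neg hv] at hcnt
                have h10 := hcT v β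
                omega
          · rw [if_neg (fun h => hga h.2), hswapO t v γ (fun h => hga h.symm) (fun h => hgb h.symm)]
            exact hcT v γ


end Bip3
lemma filter_irrel {α : Type*} {p : α → Prop} (hp hq : DecidablePred p) (s : Finset α) :
    @Finset.filter α p hp s = @Finset.filter α p hq s := by
  have h : hp = hq := Subsingleton.elim hp hq
  rw [h]

lemma ceil_le_iff {d f j : ℕ} (hf : 0 < f) : (d + f - 1) / f ≤ j ↔ d ≤ j * f := by
  have h : (d + f - 1) / f < j + 1 ↔ (d + f - 1) < (j + 1) * f := Nat.div_lt_iff_lt_mul hf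
  have hsm : (j + 1) * f = j * f + f := Nat.succ_mul j f
  constructor
  · intro hle
    have h2 := h.mp (Nat.lt_succ_of_le hle)
    omega
  · intro hd
    apply Nat.lt_succ_iff.mp
    apply h.mpr
    omega


end EvenFAux

open EvenFAux

/-- Hakimi–Kariv: if `f v` is even for every vertex `v`,
then `G` is `f`-Class 1. -/
theorem even_f_isFClassOne [Fintype V] (G : SimpleGraph V) (f : V → ℕ)
    (hf : ∀ v, 0 < f v) (heven : ∀ v, Even (f v)) :
    IsFClassOne G f := by
  classical
  set s₀ : G.edgeSet → V := fun e => (Quot.out (e : Sym2 V)).1 with hs₀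
  set t₀ : G.edgeSet → V := fun e => (Quot.out (e : Sym2 V)).2 with ht₀
  have hkey : ∀ e : G.edgeSet, (e : Sym2 V) = Sym2.mk (s₀ e) (t₀ e) := by
    intro e
    rw [hs₀, ht₀]
    simp only [Prod.mk.eta]
    exact (Quot.out_eq _).symm
  have hmem : ∀ (e : G.edgeSet) (v : V), (v ∈ (e : Sym2 V)) ↔ (s₀ e = v ∨ t₀ e = v) := by
    intro e v
    rw [hkey e, Sym2.mem_iff]
    exact or_congr eq_comm eq_comm
  have hlp : ∀ e : G.edgeSet, s₀ e ≠ t₀ e := by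
    intro e h
    apply G.not_isDiag_of_mem_edgeSet e.2
    rw [hkey e]
    exact Sym2.mk_isDiag_iff.2 h
  -- splitting lemma
  have hsplitG : ∀ (s' t' : G.edgeSet → V),
      (∀ (e : G.edgeSet) (v : V), (v ∈ (e : Sym2 V)) ↔ (s' e = v ∨ t' e = v)) →
      (∀ e : G.edgeSet, s' e ≠ t' e) →
      ∀ (P : G.edgeSet → Prop) (v : V),
      (univ.filter fun e : G.edgeSet => v ∈ (e : Sym2 V) ∧ P e).card
        = (univ.filter fun e : G.edgeSet => s' e = v ∧ P e).card
          + (univ.filter fun e : G.edgeSet => t' e = v ∧ P e).card := by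
    intro s' t' hmem' hlp' P v
    have h1 : (univ.filter fun e : G.edgeSet => v ∈ (e : Sym2 V) ∧ P e)
        = univ.filter fun e : G.edgeSet => (s' e = v ∧ P e) ∨ (t' e = v ∧ P e) := by
      apply filter_congr
      intro e _
      rw [hmem' e v]
      tauto
    rw [h1, filter_or, card_union_of_disjoint]
    rw [disjoint_left]
    intro e h2 h3
    rw [mem_filter] at h2 h3
    exact hlp' e (h2.2.1.trans h3.2.1.symm)
  -- degree identity
  have hdeg : ∀ v, (univ.filter fun e : G.edgeSet => v ∈ (e : Sym2 V)).card = G.degree v := by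
    intro v
    rw [← SimpleGraph.card_incidenceFinset_eq_degree]
    apply card_bij (fun (e : G.edgeSet) _ => (e : Sym2 V))
    · intro e he
      rw [SimpleGraph.mem_incidenceFinset]
      exact ⟨e.2, (mem_filter.1 he).2⟩
    · intro e1 h1 e2 h2 h
      exact Subtype.ext h
    · intro e' he'
      rw [SimpleGraph.mem_incidenceFinset] at he'
      exact ⟨⟨e', he'.1⟩, mem_filter.2 ⟨mem_univ _, he'.2⟩, rfl⟩
  -- lower bound direction
  have hlower : ∀ (j : ℕ) (cj : G.edgeSet → Fin j), IsFColoring G f cj → fDelta G f ≤ j := by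
    intro j cj hcol
    apply Finset.sup_le
    intro v _
    rw [ceil_le_iff (hf v)]
    rw [← hdeg v]
    have hpart : (univ.filter fun e : G.edgeSet => v ∈ (e : Sym2 V)).card
        = ∑ γ : Fin j, colorCount G cj v γ := by
      rw [card_eq_sum_card_fiberwise (f := cj) (t := univ) (fun e _ => mem_univ _)]
      apply sum_congr rfl
      intro γ _
      rw [colorCount, filter_filter]
      exact congrArg card (filter_irrel _ _ _)
    rw [hpart]
    calc ∑ γ : Fin j, colorCount G cj v γ ≤ ∑ _γ : Fin j, f v :=
          sum_le_sum fun γ _ => hcol v γ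
      _ = j * f v := by rw [sum_const, card_univ, Fintype.card_fin, smul_eq_mul]
  by_cases hk0 : fDelta G f = 0
  · -- no edges
    have hempty : IsEmpty G.edgeSet := by
      by_contra h
      rw [not_isEmpty_iff] at h
      obtain ⟨e⟩ := h
      have hv : (s₀ e) ∈ (e : Sym2 V) := (hmem e (s₀ e)).2 (Or.inl rfl)
      have hdpos : 0 < G.degree (s₀ e) := by
        rw [← hdeg]
        exact card_pos.2 ⟨e, mem_filter.2 ⟨mem_univ _, hv⟩⟩
      have hle : (G.degree (s₀ e) + f (s₀ e) - 1) / f (s₀ e) ≤ fDelta G f :=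
        le_sup (f := fun v => (G.degree v + f v - 1) / f v) (mem_univ (s₀ e))
      rw [hk0, ceil_le_iff (hf (s₀ e)), Nat.zero_mul] at hle
      omega
    have hmemS : 0 ∈ {k : ℕ | ∃ c : G.edgeSet → Fin k, IsFColoring G f c} := by
      refine ⟨fun e => (hempty.false e).elim, fun x γ => ?_⟩
      exact isEmptyElim γ
    rw [IsFClassOne, fChromaticIndex, hk0]
    exact le_antisymm (Nat.sInf_le hmemS) (Nat.zero_le _)
  · -- main case
    set k := fDelta G f with hk
    set gfun : V → ℕ := fun v => f v / 2 with hgfun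
    have hgf : ∀ v, 2 * gfun v = f v := by
      intro v
      obtain ⟨r, hr⟩ := heven v
      show 2 * (f v / 2) = f v
      omega
    have hdk : ∀ v, G.degree v ≤ k * f v := by
      intro v
      have h1 : (G.degree v + f v - 1) / f v ≤ fDelta G f :=
        le_sup (f := fun v => (G.degree v + f v - 1) / f v) (mem_univ v)
      rw [← hk] at h1
      rwa [ceil_le_iff (hf v)] at h1
    have hdTot : ∀ v, dTot s₀ t₀ v = G.degree v := by
      intro v
      have h1 := hsplitG s₀ t₀ hmem hlp (fun _ => True) v
      simp only [and_true] at h1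
      rw [dTot, ← h1, hdeg]
    obtain ⟨o, ho⟩ := orient_exists s₀ t₀
    have hmul : ∀ v, k * f v = 2 * (k * gfun v) := by
      intro v
      rw [← hgf v]
      ring
    have hout : ∀ v, (univ.filter fun e => osrc s₀ t₀ o e = v).card ≤ k * gfun v := by
      intro v
      have h1 : (univ.filter fun e => osrc s₀ t₀ o e = v).card ≤ (dTot s₀ t₀ v + 1) / 2 :=
        (ho v).1
      have h2 := hdTot v
      have h3 := hdk v
      have h4 := hmul v
      omega
    have hin : ∀ v, (univ.filter fun e => otgt s₀ t₀ o e = v).card ≤ k * gfun v := by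
      intro v
      have h1 : (univ.filter fun e => otgt s₀ t₀ o e = v).card ≤ (dTot s₀ t₀ v + 1) / 2 :=
        (ho v).2
      have h2 := hdTot v
      have h3 := hdk v
      have h4 := hmul v
      omega
    haveI : Nonempty (Fin k) := ⟨⟨0, Nat.pos_of_ne_zero hk0⟩⟩
    obtain ⟨col, hcol⟩ := bip (K := Fin k) (osrc s₀ t₀ o) (otgt s₀ t₀ o) gfun gfun univ
      (fun v => by rw [Fintype.card_fin]; exact hout v)
      (fun v => by rw [Fintype.card_fin]; exact hin v)
    -- orientation membership lemma
    have hmem2 : ∀ (e : G.edgeSet) (v : V),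
        (v ∈ (e : Sym2 V)) ↔ (osrc s₀ t₀ o e = v ∨ otgt s₀ t₀ o e = v) := by
      intro e v
      rw [hmem e v]
      unfold osrc otgt
      cases h : o e <;> simp <;> tauto
    have hlp2 : ∀ e : G.edgeSet, osrc s₀ t₀ o e ≠ otgt s₀ t₀ o e := by
      intro e
      unfold osrc otgt
      cases h : o e <;> simp
      · exact fun hh => hlp e hh.symm
      · exact hlp e
    have hcoloring : IsFColoring G f col := by
      intro v γ
      have h1' : (univ.filter fun e : G.edgeSet => osrc s₀ t₀ o e = v ∧ col e = γ).card
          ≤ gfun v := by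
        refine le_trans (le_of_eq ?_) ((hcol v γ).1)
        exact congrArg card (filter_irrel _ _ _)
      have h2' : (univ.filter fun e : G.edgeSet => otgt s₀ t₀ o e = v ∧ col e = γ).card
          ≤ gfun v := by
        refine le_trans (le_of_eq ?_) ((hcol v γ).2)
        exact congrArg card (filter_irrel _ _ _)
      have hsp := hsplitG (osrc s₀ t₀ o) (otgt s₀ t₀ o) hmem2 hlp2 (fun e => col e = γ) v
      have hsp' : colorCount G col v γ
          = (univ.filter fun e : G.edgeSet => osrc s₀ t₀ o e = v ∧ col e = γ).card
            + (univ.filter fun e : G.edgeSet => otgt s₀ t₀ o e = v ∧ col e = γ).card := by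
        rw [colorCount]
        refine Eq.trans ?_ (hsp.trans ?_)
        · exact congrArg card (filter_irrel _ _ _)
        · congr 1
          · exact congrArg card (filter_irrel _ _ _)
          · exact congrArg card (filter_irrel _ _ _)
      have h3 := hgf v
      omega
    have hmemS : k ∈ {k : ℕ | ∃ c : G.edgeSet → Fin k, IsFColoring G f c} := ⟨col, hcoloring⟩
    rw [IsFClassOne, fChromaticIndex, ← hk]
    apply le_antisymm (Nat.sInf_le hmemS)
    apply le_csInf ⟨k, hmemS⟩
    rintro j ⟨cj, hcj⟩
    exact hlower j cj hcj
end

section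
/- Let G be a simple finite claw-free graph with a function f : V(G) → ℕ assigning positive integers, such that the maximum degree of the f-core G_{Δ_f} is at most 2. Then every vertex x ∈ V(G) ∖ V(G_{Δ_f}) has at most 6 neighbors in V(G_{Δ_f}). -/
open Finset
open scoped Classical

variable {V : Type*}

/-- A graph is claw-free if it has no induced subgraph isomorphic to `K_{1,3}`. -/
def ClawFree {W : Type*} (H : SimpleGraph W) : Prop :=
  ¬ ∃ v a b c : W, a ≠ b ∧ a ≠ c ∧ b ≠ c ∧
    H.Adj v a ∧ H.Adj v b ∧ H.Adj v c ∧ ¬ H.Adj a b ∧ ¬ H.Adj a c ∧ ¬ H.Adj b c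

/-- in a claw-free graph with `Δ(G_{Δ_f}) ≤ 2`, every vertex
outside the `f`-core has at most 6 neighbors in the `f`-core. -/
theorem clawFree_core_neighbors_le_six [Fintype V] (G : SimpleGraph V) (f : V → ℕ)
    (hf : ∀ v, 0 < f v) (hclaw : ClawFree G)
    (hcore : (G.induce (fCoreSet G f)).maxDegree ≤ 2) :
    ∀ x : V, x ∉ fCoreSet G f → (G.neighborSet x ∩ fCoreSet G f).ncard ≤ 6 := by
  classical
  intro x hx
  set s := fCoreSet G f with hs
  -- key: a core vertex has at most 2 core neighbors
  have hdeg : ∀ a, a ∈ s → ((G.neighborFinset a).filter (· ∈ s)).card ≤ 2 := by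
    intro a ha
    have h1 : (G.induce s).degree ⟨a, ha⟩ ≤ 2 :=
      le_trans (SimpleGraph.degree_le_maxDegree _ _) hcore
    rw [SimpleGraph.degree] at h1
    have himg : (G.neighborFinset a).filter (· ∈ s)
        = ((G.induce s).neighborFinset ⟨a, ha⟩).image Subtype.val := by
      ext b
      simp [SimpleGraph.mem_neighborFinset, Subtype.exists, SimpleGraph.comap_adj,
        and_comm]
    rw [himg, Finset.card_image_of_injective _ Subtype.val_injective]
    exact h1
  set T : Finset V := Finset.univ.filter (fun v => G.Adj x v ∧ v ∈ s) with hT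
  have hncard : (G.neighborSet x ∩ s).ncard = T.card := by
    rw [← Set.ncard_coe_finset]
    congr 1
    ext v
    simp [hT, SimpleGraph.mem_neighborSet]
  rw [hncard]
  by_contra hcard
  push_neg at hcard
  have h7 : 7 ≤ T.card := hcard
  -- pick a
  have ha : ∃ a, a ∈ T := Finset.card_pos.mp (by omega) |>.imp (fun a h => h) |> fun h => h
  obtain ⟨a, haT⟩ := Finset.card_pos.mp (by omega : 0 < T.card)
  have haS : a ∈ s := ((Finset.mem_filter.mp haT).2).2
  set T1 := T.filter (fun b => b ≠ a ∧ ¬ G.Adj a b) with hT1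
  have hT1card : 4 ≤ T1.card := by
    rw [hT1]
    have hsplit := Finset.card_filter_add_card_filter_not
      (s := T) (p := fun b => b ≠ a ∧ ¬ G.Adj a b)
    have hsub : T.filter (fun b => ¬ (b ≠ a ∧ ¬ G.Adj a b))
        ⊆ insert a ((G.neighborFinset a).filter (· ∈ s)) := by
      intro b hb
      rw [Finset.mem_filter] at hb
      obtain ⟨hbT, hb2⟩ := hb
      push_neg at hb2
      by_cases hba : b = a
      · simp [hba]
      · refine Finset.mem_insert_of_mem ?_
        rw [Finset.mem_filter, SimpleGraph.mem_neighborFinset]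
        exact ⟨hb2 hba, ((Finset.mem_filter.mp hbT).2).2⟩
    have hle := Finset.card_le_card hsub
    have := Finset.card_insert_le a ((G.neighborFinset a).filter (· ∈ s))
    have := hdeg a haS
    omega
  obtain ⟨b, hbT1⟩ := Finset.card_pos.mp (by omega : 0 < T1.card)
  have hbT : b ∈ T := (Finset.mem_filter.mp hbT1).1
  have hbS : b ∈ s := ((Finset.mem_filter.mp hbT).2).2
  set T2 := T1.filter (fun c => c ≠ b ∧ ¬ G.Adj b c) with hT2
  have hT2card : 1 ≤ T2.card := by
    rw [hT2]
    have hsplit := Finset.card_filter_add_card_filter_not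
      (s := T1) (p := fun c => c ≠ b ∧ ¬ G.Adj b c)
    have hsub : T1.filter (fun c => ¬ (c ≠ b ∧ ¬ G.Adj b c))
        ⊆ insert b ((G.neighborFinset b).filter (· ∈ s)) := by
      intro c hc
      rw [Finset.mem_filter] at hc
      obtain ⟨hcT1, hc2⟩ := hc
      push_neg at hc2
      by_cases hcb : c = b
      · simp [hcb]
      · refine Finset.mem_insert_of_mem ?_
        rw [Finset.mem_filter, SimpleGraph.mem_neighborFinset]
        exact ⟨hc2 hcb, ((Finset.mem_filter.mp ((Finset.mem_filter.mp hcT1).1)).2).2⟩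
    have hle := Finset.card_le_card hsub
    have := Finset.card_insert_le b ((G.neighborFinset b).filter (· ∈ s))
    have := hdeg b hbS
    omega
  obtain ⟨c, hcT2⟩ := Finset.card_pos.mp (by omega : 0 < T2.card)
  obtain ⟨hcT1, hcb, hcadjb⟩ := Finset.mem_filter.mp hcT2
  obtain ⟨hcT, hca, hcadja⟩ := Finset.mem_filter.mp hcT1
  obtain ⟨_, hba, hbadja⟩ := Finset.mem_filter.mp hbT1
  exact hclaw ⟨x, a, b, c, Ne.symm hba, Ne.symm hca, Ne.symm hcb,
    (Finset.mem_filter.mp haT).2.1, (Finset.mem_filter.mp hbT).2.1,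
    (Finset.mem_filter.mp hcT).2.1, hbadja, hcadja, hcadjb⟩
end

section
/- Let G be a simple finite claw-free graph with a function f : V(G) → ℕ assigning positive integers, such that the f-core G_{Δ_f} is 2-regular. If a vertex x of G has exactly 6 neighbors in V(G_{Δ_f}), then the induced subgraph of G on these 6 neighbors is the disjoint union of two triangles K_3. -/
open Finset
open scoped Classical

variable {V : Type*}

/-- in a claw-free graph whose `f`-core is 2-regular, if a vertex
`x` has exactly 6 neighbors in the `f`-core, then the induced subgraph on these 6
neighbors is the disjoint union of two triangles. -/
theorem six_core_neighbors_two_triangles [Fintype V] (G : SimpleGraph V) (f : V → ℕ)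
    (hf : ∀ v, 0 < f v) (hclaw : ClawFree G)
    (hreg : (G.induce (fCoreSet G f)).IsRegularOfDegree 2)
    (x : V) (hx : (G.neighborSet x ∩ fCoreSet G f).ncard = 6) :
    ∃ A B : Set V, A ∪ B = G.neighborSet x ∩ fCoreSet G f ∧ Disjoint A B ∧
      A.ncard = 3 ∧ B.ncard = 3 ∧
      (∀ a ∈ A, ∀ a' ∈ A, a ≠ a' → G.Adj a a') ∧
      (∀ b ∈ B, ∀ b' ∈ B, b ≠ b' → G.Adj b b') ∧
      (∀ a ∈ A, ∀ b ∈ B, ¬ G.Adj a b) := by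
  classical
  set S : Finset V := (G.neighborSet x ∩ fCoreSet G f).toFinset with hSdef
  have hScoe : (↑S : Set V) = G.neighborSet x ∩ fCoreSet G f := Set.coe_toFinset _
  have hScard : S.card = 6 := by
    rw [hSdef, ← Set.ncard_eq_toFinset_card']; exact hx
  have hmemS : ∀ a ∈ S, G.Adj x a ∧ a ∈ fCoreSet G f := by
    intro a ha
    rw [hSdef, Set.mem_toFinset] at ha
    exact ⟨ha.1, ha.2⟩
  -- no independent triple among S
  have h1 : ∀ a ∈ S, ∀ b ∈ S, ∀ c ∈ S, a ≠ b → a ≠ c → b ≠ c →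
      ¬ G.Adj a b → ¬ G.Adj a c → ¬ G.Adj b c → False := by
    intro a ha b hb c hc hab hac hbc nab nac nbc
    exact hclaw ⟨x, a, b, c, hab, hac, hbc, (hmemS a ha).1, (hmemS b hb).1,
      (hmemS c hc).1, nab, nac, nbc⟩
  -- degree within S is at most 2
  have h2 : ∀ v ∈ S, (S.filter (fun u => G.Adj v u)).card ≤ 2 := by
    intro v hv
    have hvc : v ∈ fCoreSet G f := (hmemS v hv).2
    have hdeg : (G.induce (fCoreSet G f)).degree (⟨v, hvc⟩ : fCoreSet G f) = 2 :=
      hreg _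
    calc (S.filter (fun u => G.Adj v u)).card
        ≤ ((G.induce (fCoreSet G f)).neighborFinset (⟨v, hvc⟩ : fCoreSet G f)).card := by
          apply Finset.card_le_card_of_injOn
            (fun u => if h : u ∈ fCoreSet G f then (⟨u, h⟩ : fCoreSet G f) else ⟨v, hvc⟩)
          · intro u hu
            have hu' := Finset.mem_filter.mp hu
            have huc : u ∈ fCoreSet G f := (hmemS u hu'.1).2
            simp only [huc, dif_pos]
            rw [Finset.mem_coe, SimpleGraph.mem_neighborFinset]
            exact hu'.2
          · intro u hu w hw huw
            have hu' := Finset.mem_filter.mp hu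
            have hw' := Finset.mem_filter.mp hw
            have huc : u ∈ fCoreSet G f := (hmemS u hu'.1).2
            have hwc : w ∈ fCoreSet G f := (hmemS w hw'.1).2
            simpa [huc, hwc] using huw
      _ = 2 := by rw [SimpleGraph.card_neighborFinset_eq_degree]; exact hdeg
  -- pick a vertex v in S
  have hSne : S.Nonempty := Finset.card_pos.mp (by omega)
  obtain ⟨v, hv⟩ := hSne
  -- T : non-neighbors of v in S \ {v}
  set T : Finset V := (S.erase v).filter (fun u => ¬ G.Adj v u) with hTdef
  have hTsub : T ⊆ S := (Finset.filter_subset _ _).trans (Finset.erase_subset _ _)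
  have hvT : v ∉ T := fun h => (Finset.mem_erase.mp (Finset.mem_filter.mp h).1).1 rfl
  have hTmem : ∀ t ∈ T, t ∈ S ∧ t ≠ v ∧ ¬ G.Adj v t := by
    intro t ht
    have ht' := Finset.mem_filter.mp ht
    exact ⟨(Finset.mem_erase.mp ht'.1).2, (Finset.mem_erase.mp ht'.1).1, ht'.2⟩
  have hT3 : 3 ≤ T.card := by
    have he : (S.erase v).card = 5 := by rw [Finset.card_erase_of_mem hv, hScard]
    have hsplit := Finset.card_filter_add_card_filter_not
      (s := S.erase v) (p := fun u => G.Adj v u)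
    have hT' : ((S.erase v).filter (fun a => ¬ G.Adj v a)).card = T.card := rfl
    have hle : ((S.erase v).filter (fun u => G.Adj v u)).card ≤ 2 :=
      le_trans (Finset.card_le_card (Finset.filter_subset_filter _ (Finset.erase_subset _ _)))
        (h2 v hv)
    omega
  -- T is a clique
  have hTclique : ∀ t ∈ T, ∀ t' ∈ T, t ≠ t' → G.Adj t t' := by
    intro t ht t' ht' htt
    by_contra hne
    exact h1 v hv t (hTmem t ht).1 t' (hTmem t' ht').1
      (Ne.symm (hTmem t ht).2.1) (Ne.symm (hTmem t' ht').2.1) htt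
      (hTmem t ht).2.2 (hTmem t' ht').2.2 hne
  -- hence |T| ≤ 3
  have hTcard : T.card = 3 := by
    obtain ⟨t, ht⟩ : T.Nonempty := Finset.card_pos.mp (by omega)
    have hsub : T.erase t ⊆ S.filter (fun u => G.Adj t u) := by
      intro u hu
      have hu' := Finset.mem_erase.mp hu
      exact Finset.mem_filter.mpr ⟨hTsub hu'.2, hTclique t ht u hu'.2 (Ne.symm hu'.1)⟩
    have := le_trans (Finset.card_le_card hsub) (h2 t (hTmem t ht).1)
    rw [Finset.card_erase_of_mem ht] at this
    omega
  -- neighbors of t ∈ T in S are exactly T.erase t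
  have hNt : ∀ t ∈ T, S.filter (fun u => G.Adj t u) = T.erase t := by
    intro t ht
    have hsub : T.erase t ⊆ S.filter (fun u => G.Adj t u) := by
      intro u hu
      have hu' := Finset.mem_erase.mp hu
      exact Finset.mem_filter.mpr ⟨hTsub hu'.2, hTclique t ht u hu'.2 (Ne.symm hu'.1)⟩
    have hc : (T.erase t).card = 2 := by rw [Finset.card_erase_of_mem ht, hTcard]
    exact (Finset.eq_of_subset_of_card_le hsub (by rw [hc]; exact h2 t (hTmem t ht).1)).symm
  -- no edges between T and S \ T
  have hcross : ∀ t ∈ T, ∀ a ∈ S \ T, ¬ G.Adj t a := by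
    intro t ht a ha hadj
    have ha' := Finset.mem_sdiff.mp ha
    have : a ∈ T.erase t := by
      rw [← hNt t ht]; exact Finset.mem_filter.mpr ⟨ha'.1, hadj⟩
    exact ha'.2 (Finset.mem_of_mem_erase this)
  -- A := S \ T is a clique
  obtain ⟨t0, ht0⟩ : T.Nonempty := Finset.card_pos.mp (by omega)
  have hAclique : ∀ a ∈ S \ T, ∀ a' ∈ S \ T, a ≠ a' → G.Adj a a' := by
    intro a ha a' ha' haa
    by_contra hne
    have haT := (Finset.mem_sdiff.mp ha).2
    have haT' := (Finset.mem_sdiff.mp ha').2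
    exact h1 a (Finset.mem_sdiff.mp ha).1 a' (Finset.mem_sdiff.mp ha').1 t0 (hTmem t0 ht0).1
      haa (fun h => haT (h ▸ ht0)) (fun h => haT' (h ▸ ht0)) hne
      (fun h => hcross t0 ht0 a ha h.symm) (fun h => hcross t0 ht0 a' ha' h.symm)
  refine ⟨↑(S \ T), ↑T, ?_, ?_, ?_, ?_, ?_, ?_, ?_⟩
  · rw [← Finset.coe_union, Finset.sdiff_union_of_subset hTsub, hScoe]
  · rw [Finset.disjoint_coe]; exact Finset.sdiff_disjoint
  · rw [Set.ncard_coe_finset, Finset.card_sdiff_of_subset hTsub, hScard, hTcard]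
  · rw [Set.ncard_coe_finset, hTcard]
  · intro a ha a' ha' h; exact hAclique a ha a' ha' h
  · intro b hb b' hb' h; exact hTclique b hb b' hb' h
  · intro a ha b hb h; exact hcross b hb a ha h.symm
end
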